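/- arXiv:1911.04693 — 6 statements merged into one kernel-verified Lean document; each statement's English description precedes it below -/
import Mathlib

section
/- Let (cₘ)ₘ₌₀^∞ ⊆ ℂ satisfy Σₘ |cₘ|·rᵐ < ∞ for every r ≥ 0, and for B ≥ 0 set S_B := Σₘ |cₘ|·Bᵐ. Let F : ℂ → ℂ be entire with |F(ξ)| ≤ A·exp(B·|ξ|) for all ξ ∈ ℂ, where A, B ≥ 0. Then for every ξ ∈ ℂ the series UF(ξ) := Σₘ₌₀^∞ (−i)ᵐ·cₘ·F⁽ᵐ⁾(ξ) converges absolutely, the function UF is entire, it satisfies |UF(ξ)| ≤ A·S_{eB}·exp(e·B·|ξ|) for all ξ ∈ ℂ (e being Euler's number), and for every k ∈ ℝ applying U to the plane wave ξ ↦ exp(i·k·ξ) and evaluating at ξ = 0 yields Σₘ₌₀^∞ cₘ·kᵐ. -/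
open Complex Metric Real Nat

lemma cauchy_est (F : ℂ → ℂ) (hF : Differentiable ℂ F) (z : ℂ) (R : NNReal) (hR : 0 < R)
    (C : ℝ) (h : ∀ θ : ℝ, ‖F (circleMap z R θ)‖ ≤ C) (n : ℕ) :
    ‖iteratedDeriv n F z‖ ≤ n ! * C / (R : ℝ) ^ n := by
  have hps := hF.hasFPowerSeriesOnBall z hR
  have h1 : iteratedDeriv n F z = (n ! : ℂ) • (cauchyPowerSeries F z R n fun _ => (1:ℂ)) := by
    rw [iteratedDeriv_eq_iteratedFDeriv, ← hps.factorial_smul (1:ℂ) n,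
      Nat.cast_smul_eq_nsmul]
  have hC : 0 ≤ C := le_trans (norm_nonneg _) (h 0)
  have hInt : IntervalIntegrable (fun θ : ℝ => ‖F (circleMap z R θ)‖) MeasureTheory.volume 0 (2*π) :=
    ((hF.continuous.comp (continuous_circleMap z R)).norm).intervalIntegrable _ _
  have h2 : (∫ θ : ℝ in (0)..2 * π, ‖F (circleMap z R θ)‖) ≤ 2 * π * C := by
    calc (∫ θ : ℝ in (0)..2 * π, ‖F (circleMap z R θ)‖)
        ≤ ∫ _ : ℝ in (0)..2 * π, C :=
          intervalIntegral.integral_mono_on Real.two_pi_pos.le hInt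
            intervalIntegrable_const (fun θ _ => h θ)
      _ = 2 * π * C := by simp [mul_comm]
  have h3 : ‖cauchyPowerSeries F z R n‖ ≤ C * ((R:ℝ)⁻¹) ^ n := by
    refine le_trans (norm_cauchyPowerSeries_le F z R n) ?_
    have : |((R:ℝ))| = (R:ℝ) := abs_of_nonneg R.2
    rw [this]
    gcongr
    calc (2 * π)⁻¹ * ∫ θ : ℝ in (0)..2 * π, ‖F (circleMap z R θ)‖
        ≤ (2 * π)⁻¹ * (2 * π * C) := by gcongr
      _ = C := by field_simp
  have h4 : ‖(cauchyPowerSeries F z R n) fun _ => (1:ℂ)‖ ≤ C * ((R:ℝ)⁻¹) ^ n := by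
    refine le_trans ((cauchyPowerSeries F z R n).le_opNorm _) ?_
    simpa using h3
  rw [h1, norm_smul]
  simp only [Complex.norm_natCast]
  rw [div_eq_mul_inv, ← inv_pow, mul_assoc]
  gcongr

lemma iteratedDeriv_const_succ (a : ℂ) : ∀ n : ℕ, iteratedDeriv (n+1) (fun _ : ℂ => a) = 0 := by
  intro n
  induction n with
  | zero => ext x; simp [iteratedDeriv_succ, iteratedDeriv_zero]
  | succ m ih =>
      ext x; rw [iteratedDeriv_succ, ih,
        show (0:ℂ→ℂ) = fun _ => (0:ℂ) from rfl, deriv_const']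

lemma master_bound (F : ℂ → ℂ) (hF : Differentiable ℂ F) (A B : ℝ) (hA : 0 ≤ A) (hB : 0 ≤ B)
    (hbound : ∀ ξ : ℂ, ‖F ξ‖ ≤ A * Real.exp (B * ‖ξ‖)) (n : ℕ) (z : ℂ) :
    ‖iteratedDeriv n F z‖ ≤ A * (Real.exp 1 * B) ^ n * Real.exp (Real.exp 1 * B * ‖z‖) := by
  have he1 : (1:ℝ) ≤ Real.exp 1 := by
    have := Real.add_one_le_exp (1:ℝ); linarith
  have hmono : Real.exp (B * ‖z‖) ≤ Real.exp (Real.exp 1 * B * ‖z‖) := by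
    exact Real.exp_le_exp.2 (mul_le_mul_of_nonneg_right (le_mul_of_one_le_left hB he1) (norm_nonneg z))
  match n with
  | 0 =>
    rw [iteratedDeriv_zero, pow_zero, mul_one]
    exact le_trans (hbound z) (mul_le_mul_of_nonneg_left hmono hA)
  | (m+1) =>
    rcases eq_or_lt_of_le hB with hB0 | hBpos
    · -- B = 0 : F is constant
      have hb : Bornology.IsBounded (Set.range F) := by
        apply isBounded_iff_forall_norm_le.2
        exact ⟨A, by rintro y ⟨x, rfl⟩; simpa [← hB0] using hbound x⟩
      have hconst : F = fun _ => F 0 := by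
        funext w; exact hF.apply_eq_apply_of_bounded hb w 0
      rw [hconst, iteratedDeriv_const_succ]
      simp [← hB0]
    · set n := m + 1
      have hn : (0:ℝ) < n := by positivity
      set R : NNReal := ⟨(n : ℝ) / B, by positivity⟩ with hRdef
      have hRpos : 0 < R := by
        rw [← NNReal.coe_lt_coe]; show (0:ℝ) < (n:ℝ)/B; positivity
      have hRcoe : (R : ℝ) = (n : ℝ) / B := rfl
      have hC : ∀ θ : ℝ, ‖F (circleMap z R θ)‖ ≤ A * Real.exp (B * (‖z‖ + (R:ℝ))) := by
        intro θ
        refine le_trans (hbound _) ?_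
        gcongr
        calc ‖circleMap z R θ‖ = ‖z + (circleMap z R θ - z)‖ := by ring_nf
          _ ≤ ‖z‖ + ‖circleMap z R θ - z‖ := norm_add_le _ _
          _ ≤ ‖z‖ + (R:ℝ) := by
              rw [circleMap_sub_center]
              simp only [norm_circleMap_zero]
              rw [_root_.abs_of_nonneg (NNReal.coe_nonneg R)]
      have key := cauchy_est F hF z R hRpos _ hC n
      have hfact : (n ! : ℝ) ≤ (n:ℝ) ^ n := by
        exact_mod_cast Nat.factorial_le_pow n
      have hBR : B * (R:ℝ) = (n:ℝ) := by
        rw [hRcoe]; field_simp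
      have hRn : (R:ℝ) ^ n = (n:ℝ) ^ n / B ^ n := by rw [hRcoe, div_pow]
      have hkey : (n ! : ℝ) * Real.exp (B * (R:ℝ)) / (R:ℝ) ^ n ≤ (Real.exp 1 * B) ^ n := by
        rw [hBR, hRn, div_le_iff₀ (by positivity), ← Real.exp_one_rpow (n:ℝ), Real.rpow_natCast]
        calc (n ! : ℝ) * Real.exp 1 ^ n
            ≤ (n:ℝ)^n * Real.exp 1 ^ n := by gcongr
          _ = Real.exp 1 ^ n * (n:ℝ)^n := by ring
          _ ≤ (Real.exp 1 * B) ^ n * ((n:ℝ) ^ n / B ^ n) := by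
              have hq : B ^ n * ((n:ℝ) ^ n / B ^ n) = (n:ℝ) ^ n := by
                field_simp
              rw [mul_pow, mul_assoc, hq]
      calc ‖iteratedDeriv n F z‖ ≤ (n !) * (A * Real.exp (B * (‖z‖ + (R:ℝ)))) / (R:ℝ) ^ n := key
        _ = A * Real.exp (B * ‖z‖) * ((n ! : ℝ) * Real.exp (B * (R:ℝ)) / (R:ℝ) ^ n) := by
            rw [mul_add, Real.exp_add]; ring
        _ ≤ A * Real.exp (B * ‖z‖) * (Real.exp 1 * B) ^ n :=
            mul_le_mul_of_nonneg_left hkey (by positivity)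
        _ ≤ A * Real.exp (Real.exp 1 * B * ‖z‖) * (Real.exp 1 * B) ^ n := by gcongr
        _ = A * (Real.exp 1 * B) ^ n * Real.exp (Real.exp 1 * B * ‖z‖) := by ring



/-- Given coefficients `(cₘ)` with `Σₘ |cₘ|·rᵐ < ∞` for all `r ≥ 0`, and an entire `F`
with `|F(ξ)| ≤ A·exp(B·|ξ|)`, the series `UF(ξ) = Σₘ (−i)ᵐ·cₘ·F⁽ᵐ⁾(ξ)` converges
absolutely, defines an entire function, satisfies `|UF(ξ)| ≤ A·S_{eB}·exp(e·B·|ξ|)`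
where `S_{eB} = Σₘ |cₘ|·(e·B)ᵐ`, and applied to the plane wave `ξ ↦ exp(i·k·ξ)` at
`ξ = 0` it yields `Σₘ cₘ·kᵐ`. -/
theorem convolution_operator_on_A1
    (c : ℕ → ℂ) (hc : ∀ r : ℝ, 0 ≤ r → Summable (fun m : ℕ => ‖c m‖ * r ^ m))
    (F : ℂ → ℂ) (hF : Differentiable ℂ F)
    (A B : ℝ) (hA : 0 ≤ A) (hB : 0 ≤ B)
    (hbound : ∀ ξ : ℂ, ‖F ξ‖ ≤ A * Real.exp (B * ‖ξ‖)) :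
    (∀ ξ : ℂ, Summable (fun m : ℕ =>
        ‖(-Complex.I) ^ m * c m * iteratedDeriv m F ξ‖)) ∧
    Differentiable ℂ (fun ξ : ℂ => ∑' m : ℕ, (-Complex.I) ^ m * c m * iteratedDeriv m F ξ) ∧
    (∀ ξ : ℂ, ‖∑' m : ℕ, (-Complex.I) ^ m * c m * iteratedDeriv m F ξ‖ ≤
        A * (∑' m : ℕ, ‖c m‖ * (Real.exp 1 * B) ^ m) *
          Real.exp (Real.exp 1 * B * ‖ξ‖)) ∧
    (∀ k : ℝ,
        (∑' m : ℕ, (-Complex.I) ^ m * c m *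
            iteratedDeriv m (fun ξ : ℂ => Complex.exp (Complex.I * k * ξ)) 0) =
          ∑' m : ℕ, c m * (k : ℂ) ^ m) := by
  have hE : (0:ℝ) ≤ Real.exp 1 * B := by positivity
  have hMB : ∀ (m : ℕ) (ξ : ℂ), ‖iteratedDeriv m F ξ‖ ≤
      A * (Real.exp 1 * B) ^ m * Real.exp (Real.exp 1 * B * ‖ξ‖) :=
    fun m ξ => master_bound F hF A B hA hB
      (by simpa using hbound) m ξ
  have habs : ∀ (m : ℕ) (ξ : ℂ), ‖(-Complex.I) ^ m * c m * iteratedDeriv m F ξ‖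
      = ‖c m‖ * ‖iteratedDeriv m F ξ‖ := by
    intro m ξ
    simp
  -- Part 1
  have hsum : ∀ ξ : ℂ, Summable (fun m : ℕ =>
      ‖(-Complex.I) ^ m * c m * iteratedDeriv m F ξ‖) := by
    intro ξ
    refine Summable.of_nonneg_of_le (fun m => norm_nonneg _)
      (fun m => ?_) (((hc (Real.exp 1 * B) hE).mul_left
        (A * Real.exp (Real.exp 1 * B * ‖ξ‖))))
    rw [habs]
    calc ‖c m‖ * ‖iteratedDeriv m F ξ‖
        ≤ ‖c m‖ * (A * (Real.exp 1 * B) ^ m * Real.exp (Real.exp 1 * B * ‖ξ‖)) :=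
          mul_le_mul_of_nonneg_left (hMB m ξ) (norm_nonneg _)
      _ = A * Real.exp (Real.exp 1 * B * ‖ξ‖) * (‖c m‖ * (Real.exp 1 * B) ^ m) := by
          ring
  -- Part 2
  have hdiff : Differentiable ℂ
      (fun ξ : ℂ => ∑' m : ℕ, (-Complex.I) ^ m * c m * iteratedDeriv m F ξ) := by
    intro ξ₀
    have hmem : ξ₀ ∈ Metric.ball (0:ℂ) (‖ξ₀‖ + 1) := by
      rw [Metric.mem_ball, _root_.dist_zero_right]; linarith
    have hu : Summable (fun m : ℕ =>
        (A * Real.exp (Real.exp 1 * B * (‖ξ₀‖ + 1)) * (Real.exp 1 * B)) *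
          (‖c m‖ * (Real.exp 1 * B) ^ m)) :=
      (hc (Real.exp 1 * B) hE).mul_left _
    have hFd : ∀ m : ℕ, Differentiable ℂ (iteratedDeriv m F) := fun m =>
      (hF.contDiff : ContDiff ℂ ⊤ F).differentiable_iteratedDeriv m
        (by exact_mod_cast WithTop.coe_lt_top (m : ℕ∞))
    refine (hasDerivAt_tsum_of_isPreconnected
      (g := fun (m : ℕ) (ξ : ℂ) => (-Complex.I) ^ m * c m * iteratedDeriv m F ξ)
      (g' := fun (m : ℕ) (ξ : ℂ) => (-Complex.I) ^ m * c m * iteratedDeriv (m+1) F ξ)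
      hu Metric.isOpen_ball (convex_ball (0:ℂ) (‖ξ₀‖+1)).isPreconnected
      (fun m y _ => ?_) (fun m y hy => ?_) hmem ?_ hmem).differentiableAt
    · have h1 : HasDerivAt (iteratedDeriv m F) (iteratedDeriv (m+1) F y) y := by
        rw [iteratedDeriv_succ]
        exact ((hFd m) y).hasDerivAt
      exact h1.const_mul _
    · have hyb : ‖y‖ ≤ ‖ξ₀‖ + 1 := by
        rw [Metric.mem_ball, _root_.dist_zero_right] at hy; linarith
      calc ‖(-Complex.I) ^ m * c m * iteratedDeriv (m+1) F y‖
          = ‖c m‖ * ‖iteratedDeriv (m+1) F y‖ := by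
            simp
        _ ≤ ‖c m‖ *
              (A * (Real.exp 1 * B) ^ (m+1) * Real.exp (Real.exp 1 * B * (‖ξ₀‖ + 1))) := by
            refine mul_le_mul_of_nonneg_left ?_ (norm_nonneg _)
            refine le_trans (hMB (m+1) y) ?_
            gcongr
        _ = (A * Real.exp (Real.exp 1 * B * (‖ξ₀‖ + 1)) * (Real.exp 1 * B)) *
              (‖c m‖ * (Real.exp 1 * B) ^ m) := by
            rw [pow_succ]; ring
    · exact Summable.of_norm (by simpa using hsum ξ₀)
  refine ⟨hsum, hdiff, ?_, ?_⟩
  -- Part 3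
  · intro ξ
    have h1 : ‖∑' m : ℕ, (-Complex.I) ^ m * c m * iteratedDeriv m F ξ‖ ≤
        ∑' m : ℕ, ‖(-Complex.I) ^ m * c m * iteratedDeriv m F ξ‖ :=
      norm_tsum_le_tsum_norm (by simpa using hsum ξ)
    refine le_trans h1 ?_
    have h2 : ∑' m : ℕ, ‖(-Complex.I) ^ m * c m * iteratedDeriv m F ξ‖ ≤
        ∑' m : ℕ, (A * Real.exp (Real.exp 1 * B * ‖ξ‖)) *
          (‖c m‖ * (Real.exp 1 * B) ^ m) := by
      refine Summable.tsum_le_tsum (fun m => ?_)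
        (by simpa using hsum ξ)
        ((hc (Real.exp 1 * B) hE).mul_left _)
      rw [habs]
      calc ‖c m‖ * ‖iteratedDeriv m F ξ‖
          ≤ ‖c m‖ *
            (A * (Real.exp 1 * B) ^ m * Real.exp (Real.exp 1 * B * ‖ξ‖)) :=
            mul_le_mul_of_nonneg_left (hMB m ξ) (norm_nonneg _)
        _ = (A * Real.exp (Real.exp 1 * B * ‖ξ‖)) *
            (‖c m‖ * (Real.exp 1 * B) ^ m) := by ring
    refine le_trans h2 ?_
    rw [tsum_mul_left]
    apply le_of_eq; ring
  -- Part 4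
  · intro k
    apply tsum_congr
    intro m
    rw [iteratedDeriv_cexp_const_mul m (Complex.I * (k:ℂ))]
    simp only [mul_zero, Complex.exp_zero, mul_one]
    have h3 : (-Complex.I) * (Complex.I * (k:ℂ)) = (k:ℂ) := by
      rw [neg_mul, ← mul_assoc, Complex.I_mul_I]; ring
    rw [mul_assoc, mul_comm (c m), ← mul_assoc, ← mul_pow, h3, mul_comm]
end

section
/- There exist constants C > 0 and R > 0 such that for all z ∈ ℂ with Re(z) ≥ 0 and |z| ≥ R one has |Λ(z) − 1/(√π·z)| ≤ C/|z|²; that is, Λ(z) = 1/(√π·z) + O(1/|z|²) as |z| → ∞ in the closed right half-plane. -/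
open MeasureTheory Set Real Filter Topology intervalIntegral

set_option maxHeartbeats 1000000


/-- The modified error function `Λ(z) = exp(z²)·(1 − (2/√π)·∫₀^z exp(−ξ²) dξ)`,
where the integral is the complex line integral along the segment from `0` to `z`. -/
noncomputable def Lam (z : ℂ) : ℂ :=
  Complex.exp (z ^ 2) *
    (1 - (2 / (Real.sqrt Real.pi : ℂ)) * ∫ s in (0:ℝ)..1, z * Complex.exp (-((s : ℂ) * z) ^ 2))


/-- `(1+|t|)·e^{-(t-T)²}` is integrable on ℝ. -/
lemma integrable_one_add_abs_mul_exp (T : ℝ) :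
    Integrable (fun t : ℝ => (1 + |t|) * Real.exp (-(t - T)^2)) := by
  have h1 : Integrable (fun u : ℝ => (1 + |u + T|) * Real.exp (-u^2)) := by
    have ha : Integrable (fun u : ℝ => (1 + |T|) * Real.exp (-(1:ℝ) * u^2)) :=
      (integrable_exp_neg_mul_sq one_pos).const_mul _
    have hb : Integrable (fun u : ℝ => |u * Real.exp (-(1:ℝ) * u^2)|) :=
      (integrable_mul_exp_neg_mul_sq one_pos).abs
    refine ((ha.add hb).mono' ?_ ?_)
    · exact (Measurable.aestronglyMeasurable (by measurability))
    · filter_upwards with u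
      have h0 : (0:ℝ) < Real.exp (-u^2) := Real.exp_pos _
      rw [Real.norm_eq_abs, abs_of_nonneg (by positivity)]
      simp only [Pi.add_apply, abs_mul, abs_of_nonneg h0.le]
      have : |u + T| ≤ |T| + |u| := by
        calc |u + T| ≤ |u| + |T| := abs_add_le _ _
        _ = |T| + |u| := by ring
      have := mul_le_mul_of_nonneg_right this h0.le
      simp only [neg_mul, one_mul]
      nlinarith [abs_nonneg u, abs_nonneg T, abs_of_nonneg h0.le]
  have := h1.comp_sub_right T
  refine this.congr ?_
  filter_upwards with t
  simp [sub_add_cancel]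

noncomputable def Hray (z : ℂ) : ℂ := ∫ t in Ioi (0:ℝ), Complex.exp (-(z + (t:ℂ))^2)

lemma re_sq_add (z : ℂ) (t : ℝ) : ((z + (t:ℂ))^2).re = (z.re + t)^2 - z.im^2 := by
  rw [sq, Complex.mul_re]
  simp [Complex.add_re, Complex.add_im, Complex.ofReal_re, Complex.ofReal_im]
  ring

lemma norm_cexp_neg_sq_add (z : ℂ) (t : ℝ) :
    ‖Complex.exp (-(z + (t:ℂ))^2)‖ = Real.exp (-((z.re + t)^2 - z.im^2)) := by
  rw [Complex.norm_exp, Complex.neg_re, re_sq_add]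

lemma re_sq_lower {z : ℂ} {T t : ℝ} (hx : |z.re| ≤ T) (hy : |z.im| ≤ T) (ht : 0 ≤ t) :
    (t - T)^2 - 2*T^2 ≤ (z.re + t)^2 - z.im^2 := by
  have h1 : -T ≤ z.re := (abs_le.mp hx).1
  have h2 : z.im^2 ≤ T^2 := by nlinarith [abs_le.mp hy, abs_nonneg z.im]
  nlinarith [mul_nonneg ht (by linarith : (0:ℝ) ≤ z.re + T), sq_nonneg z.re]

lemma hasDerivAt_negsq_ofReal (z₀ : ℂ) (t : ℝ) :
    HasDerivAt (fun t : ℝ => -(z₀ + (t:ℂ))^2) ((-2) * (z₀ + (t:ℂ))) t := by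
  have hid : HasDerivAt (fun t : ℝ => (t:ℂ)) 1 t := HasDerivAt.ofReal_comp (hasDerivAt_id t)
  have h1 := hid.const_add z₀
  have h2 := (h1.mul h1).neg
  convert h2 using 1
  · rfl
  · funext s; show _ = -((z₀ + (s:ℂ)) * (z₀ + s)); ring
  · ring

lemma hasDerivAt_Hray (z₀ : ℂ) : HasDerivAt Hray (-Complex.exp (-z₀^2)) z₀ := by
  set T : ℝ := ‖z₀‖ + 1 with hT
  have hT1 : 1 ≤ T := by rw [hT]; linarith [norm_nonneg z₀]
  have key := _root_.hasDerivAt_integral_of_dominated_loc_of_deriv_le (μ := volume.restrict (Ioi (0:ℝ)))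
    (F := fun z (t : ℝ) => Complex.exp (-(z + (t:ℂ))^2))
    (F' := fun z (t : ℝ) => (-2) * (z + (t:ℂ)) * Complex.exp (-(z + (t:ℂ))^2))
    (x₀ := z₀) (s := Metric.ball z₀ 1)
    (bound := fun t => 2*T*Real.exp (2*T^2) * ((1 + |t|) * Real.exp (-(t - T)^2)))
    (Metric.ball_mem_nhds z₀ one_pos) ?_ ?_ ?_ ?_ ?_ ?_
  · obtain ⟨hint, hder⟩ := key
    have h2 : (∫ t in Ioi (0:ℝ), (-2) * (z₀ + (t:ℂ)) * Complex.exp (-(z₀ + (t:ℂ))^2))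
        = -Complex.exp (-z₀^2) := by
      have := integral_Ioi_of_hasDerivAt_of_tendsto' (a := 0)
        (f := fun t : ℝ => Complex.exp (-(z₀ + (t:ℂ))^2))
        (f' := fun t : ℝ => (-2) * (z₀ + (t:ℂ)) * Complex.exp (-(z₀ + (t:ℂ))^2))
        (m := 0) ?_ hint ?_
      · rw [this]; simp
      · intro t _
        have := (hasDerivAt_negsq_ofReal z₀ t).cexp
        convert this using 1; rfl; ring
      · -- tendsto 0
        have h4 : Filter.Tendsto (fun t : ℝ => z₀.re + t) Filter.atTop Filter.atTop :=
          Filter.tendsto_atTop_add_const_left _ _ Filter.tendsto_id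
        have h5 : Filter.Tendsto (fun t : ℝ => (z₀.re + t)^2) Filter.atTop Filter.atTop := by
          have := h4.atTop_mul_atTop₀ h4
          convert this using 2 with t; ring
        have h6 : Filter.Tendsto (fun t : ℝ => z₀.im^2 - (z₀.re + t)^2) Filter.atTop Filter.atBot := by
          simp only [sub_eq_add_neg]
          exact Filter.tendsto_atBot_add_const_left _ _ (tendsto_neg_atTop_atBot.comp h5)
        have hg : Filter.Tendsto (fun t : ℝ => Real.exp (z₀.im^2 - (z₀.re + t)^2))
            Filter.atTop (𝓝 0) := Real.tendsto_exp_atBot.comp h6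
        refine squeeze_zero_norm' ?_ hg
        filter_upwards [Filter.eventually_ge_atTop (0:ℝ)] with t _
        rw [norm_cexp_neg_sq_add, neg_sub]
    rw [h2] at hder
    exact hder
  · -- hF_meas
    filter_upwards with z
    exact (Continuous.aestronglyMeasurable (by fun_prop)).restrict
  · -- hF_int at z₀
    refine (((integrable_one_add_abs_mul_exp T).const_mul (Real.exp (2*T^2))).restrict).mono' 
      (Continuous.aestronglyMeasurable (by fun_prop)).restrict ?_
    rw [ae_restrict_iff' measurableSet_Ioi]
    filter_upwards with t ht
    rw [norm_cexp_neg_sq_add]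
    have hx : |z₀.re| ≤ T := le_trans (Complex.abs_re_le_norm z₀) (by simp [hT])
    have hy : |z₀.im| ≤ T := le_trans (Complex.abs_im_le_norm z₀) (by simp [hT])
    have := re_sq_lower hx hy (le_of_lt ht)
    calc Real.exp (-((z₀.re + t)^2 - z₀.im^2)) ≤ Real.exp (2*T^2 - (t-T)^2) := by
          apply Real.exp_le_exp.mpr; linarith
      _ = Real.exp (2*T^2) * Real.exp (-(t-T)^2) := by
          rw [← Real.exp_add]; congr 1
      _ ≤ Real.exp (2*T^2) * ((1 + |t|) * Real.exp (-(t-T)^2)) := by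
          nlinarith [abs_nonneg t, Real.exp_pos (2*T^2), Real.exp_pos (-(t-T)^2),
            mul_pos (Real.exp_pos (2*T^2)) (Real.exp_pos (-(t-T)^2))]
  · -- hF'_meas
    exact (Continuous.aestronglyMeasurable (by fun_prop)).restrict
  · -- h_bound
    rw [ae_restrict_iff' measurableSet_Ioi]
    filter_upwards with t ht
    intro z hz
    have hzT : ‖z‖ ≤ T := by
      have := mem_ball_iff_norm.mp hz
      have h7 : ‖z - z₀‖ < 1 := this
      calc ‖z‖ = ‖z - z₀ + z₀‖ := by ring_nf
        _ ≤ ‖z - z₀‖ + ‖z₀‖ := norm_add_le _ _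
        _ ≤ T := by rw [hT]; linarith
    have hx : |z.re| ≤ T := le_trans (Complex.abs_re_le_norm z) hzT
    have hy : |z.im| ≤ T := le_trans (Complex.abs_im_le_norm z) hzT
    rw [norm_mul, norm_mul, norm_cexp_neg_sq_add]
    have hre := re_sq_lower hx hy (le_of_lt ht)
    have hb1 : ‖(-2 : ℂ)‖ * ‖z + (t:ℂ)‖ ≤ 2 * (T * (1 + |t|)) := by
      rw [norm_neg]
      rw [Complex.norm_two]
      have : ‖z + (t:ℂ)‖ ≤ T + |t| := by
        calc ‖z + (t:ℂ)‖ ≤ ‖z‖ + ‖(t:ℂ)‖ := norm_add_le _ _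
          _ ≤ T + |t| := by rw [Complex.norm_real, Real.norm_eq_abs]; linarith
      nlinarith [abs_nonneg t]
    have hb2 : Real.exp (-((z.re + t)^2 - z.im^2)) ≤ Real.exp (2*T^2) * Real.exp (-(t-T)^2) := by
      rw [← Real.exp_add]; apply Real.exp_le_exp.mpr; linarith
    calc ‖(-2:ℂ)‖ * ‖z + (t:ℂ)‖ * Real.exp (-((z.re + t)^2 - z.im^2))
        ≤ 2 * (T * (1 + |t|)) * (Real.exp (2*T^2) * Real.exp (-(t-T)^2)) := by
          apply mul_le_mul hb1 hb2 (Real.exp_pos _).le (by positivity)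
      _ = 2*T*Real.exp (2*T^2) * ((1 + |t|) * Real.exp (-(t - T)^2)) := by ring
  · -- bound integrable
    exact ((integrable_one_add_abs_mul_exp T).const_mul _).restrict
  · -- h_diff
    filter_upwards with t
    intro z _
    have h3 : HasDerivAt (fun z : ℂ => -(z + (t:ℂ))^2) ((-2) * (z + (t:ℂ))) z := by
      have := (((hasDerivAt_id z).add_const ((t:ℂ))).pow 2).neg
      convert this using 1; rfl; rfl; rfl; simp only [id_eq, pow_one]; ring
    have := h3.cexp
    convert this using 1; rfl; ring

noncomputable def Fseg (z : ℂ) : ℂ := ∫ s in (0:ℝ)..1, z * Complex.exp (-((s:ℂ) * z)^2)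

lemma norm_one_sub_two_mul_sq_cexp_le {w : ℂ} {T : ℝ} (hw : ‖w‖ ≤ T) :
    ‖(1 - 2*w^2) * Complex.exp (-w^2)‖ ≤ (1 + 2*T^2) * Real.exp (T^2) := by
  have h0 : (0:ℝ) ≤ T := le_trans (norm_nonneg w) hw
  rw [norm_mul, Complex.norm_exp]
  have h1 : ‖1 - 2*w^2‖ ≤ 1 + 2*T^2 := by
    calc ‖1 - 2*w^2‖ ≤ ‖(1:ℂ)‖ + ‖2*w^2‖ := norm_sub_le _ _
      _ = 1 + 2 * ‖w‖^2 := by simp [norm_mul, norm_pow, Complex.norm_two]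
      _ ≤ 1 + 2*T^2 := by nlinarith [norm_nonneg w]
  have h2 : Real.exp ((-w^2).re) ≤ Real.exp (T^2) := by
    apply Real.exp_le_exp.mpr
    have := Complex.abs_re_le_norm (w^2)
    have habs : ‖w^2‖ ≤ T^2 := by
      rw [norm_pow]; nlinarith [norm_nonneg w]
    rw [Complex.neg_re]
    cases' abs_le.mp this with hl hr
    linarith
  calc ‖1 - 2*w^2‖ * Real.exp ((-w^2).re)
      ≤ (1 + 2*T^2) * Real.exp (T^2) :=
    mul_le_mul h1 h2 (Real.exp_pos _).le (by positivity)

lemma hasDerivAt_Fseg (z₀ : ℂ) : HasDerivAt Fseg (Complex.exp (-z₀^2)) z₀ := by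
  set T : ℝ := ‖z₀‖ + 1 with hT
  have hFeq : Fseg = fun z => ∫ s in Ioc (0:ℝ) 1, z * Complex.exp (-((s:ℂ) * z)^2) :=
    funext fun z => intervalIntegral.integral_of_le zero_le_one
  have key := _root_.hasDerivAt_integral_of_dominated_loc_of_deriv_le
    (μ := volume.restrict (Ioc (0:ℝ) 1))
    (F := fun z (s : ℝ) => z * Complex.exp (-((s:ℂ) * z)^2))
    (F' := fun z (s : ℝ) => (1 - 2*((s:ℂ)*z)^2) * Complex.exp (-((s:ℂ) * z)^2))
    (x₀ := z₀) (s := Metric.ball z₀ 1)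
    (bound := fun _ => (1 + 2*T^2) * Real.exp (T^2))
    (Metric.ball_mem_nhds z₀ one_pos) ?_ ?_ ?_ ?_ ?_ ?_
  · obtain ⟨hint, hder⟩ := key
    rw [hFeq]
    have h2 : (∫ s in Ioc (0:ℝ) 1, (1 - 2*((s:ℂ)*z₀)^2) * Complex.exp (-((s:ℂ) * z₀)^2))
        = Complex.exp (-z₀^2) := by
      rw [← intervalIntegral.integral_of_le zero_le_one]
      have hftc := intervalIntegral.integral_eq_sub_of_hasDerivAt (a := (0:ℝ)) (b := 1)
        (f := fun s : ℝ => (s:ℂ) * Complex.exp (-((s:ℂ) * z₀)^2))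
        (f' := fun s : ℝ => (1 - 2*((s:ℂ)*z₀)^2) * Complex.exp (-((s:ℂ) * z₀)^2)) ?_ ?_
      · rw [hftc]; norm_num
      · intro s _
        have hid : HasDerivAt (fun s : ℝ => (s:ℂ)) 1 s := HasDerivAt.ofReal_comp (hasDerivAt_id s)
        have h3 := hid.mul_const z₀
        have h4 := ((h3.mul h3).neg).cexp
        have h5 := hid.mul h4
        convert h5 using 1
        · rfl
        · funext u; simp only [Pi.mul_apply, Pi.neg_apply]; ring_nf
        · simp only [Pi.mul_apply, Pi.neg_apply]; ring_nf
      · apply Continuous.intervalIntegrable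
        continuity
    rw [h2] at hder
    exact hder
  · filter_upwards with z
    exact (Continuous.aestronglyMeasurable (by fun_prop)).restrict
  · -- integrable at z₀
    exact (Continuous.integrableOn_Ioc (by fun_prop))
  · exact (Continuous.aestronglyMeasurable (by fun_prop)).restrict
  · rw [ae_restrict_iff' measurableSet_Ioc]
    filter_upwards with s hs
    intro z hz
    have hzT : ‖z‖ ≤ T := by
      have h7 : ‖z - z₀‖ < 1 := mem_ball_iff_norm.mp hz
      calc ‖z‖ = ‖z - z₀ + z₀‖ := by ring_nf
        _ ≤ ‖z - z₀‖ + ‖z₀‖ := norm_add_le _ _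
        _ ≤ T := by rw [hT]; linarith
    have hw : ‖(s:ℂ)*z‖ ≤ T := by
      rw [norm_mul, Complex.norm_real, Real.norm_eq_abs]
      have hs1 : |s| ≤ 1 := abs_le.mpr ⟨by linarith [hs.1], hs.2⟩
      nlinarith [norm_nonneg z, le_trans (norm_nonneg z) hzT]
    exact norm_one_sub_two_mul_sq_cexp_le hw
  · exact (integrableOn_const measure_Ioc_lt_top.ne enorm_ne_top)
  · filter_upwards with s
    intro z _
    have h3 : HasDerivAt (fun z : ℂ => -((s:ℂ)*z)^2) (-(2*(s:ℂ)^2*z)) z := by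
      have := (((hasDerivAt_id z).const_mul (s:ℂ)).pow 2).neg
      convert this using 1
      rfl; rfl; rfl; simp only [id_eq]; norm_num; ring
    have h4 := h3.cexp
    have h5 := (hasDerivAt_id z).mul h4
    convert h5 using 1
    rfl; rfl; simp only [id_eq]; ring

lemma Fseg_add_Hray (z : ℂ) : Fseg z + Hray z = ((Real.sqrt Real.pi : ℝ) : ℂ) / 2 := by
  have hdiff : ∀ w : ℂ, HasDerivAt (fun z => Fseg z + Hray z) 0 w := by
    intro w
    have := (hasDerivAt_Fseg w).add (hasDerivAt_Hray w)
    exact this.congr_deriv (by simp)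
  have hconst := is_const_of_deriv_eq_zero (𝕜 := ℂ)
    (fun w => (hdiff w).differentiableAt) (fun w => (hdiff w).deriv) z 0
  rw [hconst]
  have h0 : Fseg 0 = 0 := by simp [Fseg]
  have h1 : Hray 0 = ((Real.sqrt Real.pi / 2 : ℝ) : ℂ) := by
    unfold Hray
    have heq : ∀ t : ℝ, Complex.exp (-((0:ℂ) + (t:ℂ))^2) = Complex.exp (-1 * (t:ℂ)^2) := by
      intro t; congr 1; ring
    simp_rw [heq]
    rw [integral_gaussian_complex_Ioi (by norm_num : (0:ℝ) < (1:ℂ).re)]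
    rw [div_one, Complex.ofReal_div]
    congr 1
    rw [Real.sqrt_eq_rpow, Complex.ofReal_cpow Real.pi_pos.le]
    norm_num
  rw [h0, h1]
  push_cast
  ring

lemma sqrt_pi_ne : ((Real.sqrt Real.pi : ℝ) : ℂ) ≠ 0 := by
  rw [Complex.ofReal_ne_zero]
  exact (Real.sqrt_pos.mpr Real.pi_pos).ne'

lemma Lam_eq (z : ℂ) :
    Lam z = (2 / ((Real.sqrt Real.pi : ℝ) : ℂ)) *
      ∫ t in Ioi (0:ℝ), Complex.exp (-(t:ℂ)^2 - 2*(t:ℂ)*z) := by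
  unfold Lam
  have h1 : (∫ s in (0:ℝ)..1, z * Complex.exp (-((s:ℂ) * z)^2)) =
      ((Real.sqrt Real.pi : ℝ) : ℂ)/2 - Hray z := by
    have := Fseg_add_Hray z
    unfold Fseg at this
    linear_combination this
  rw [h1]
  have h2 : (1 : ℂ) - 2/((Real.sqrt Real.pi : ℝ) : ℂ) *
      (((Real.sqrt Real.pi : ℝ) : ℂ)/2 - Hray z) =
      2/((Real.sqrt Real.pi : ℝ) : ℂ) * Hray z := by
    field_simp [sqrt_pi_ne]
    ring
  rw [h2, show Complex.exp (z^2) * ((2/((Real.sqrt Real.pi : ℝ) : ℂ)) * Hray z) =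
    (2/((Real.sqrt Real.pi : ℝ) : ℂ)) * (Complex.exp (z^2) * Hray z) from by ring]
  congr 1
  unfold Hray
  rw [← MeasureTheory.integral_const_mul]
  congr 1
  funext t
  rw [← Complex.exp_add]
  congr 1
  ring

lemma Ere (t : ℝ) (z : ℂ) : (-(t:ℂ)^2 - 2*(t:ℂ)*z).re = -t^2 - 2*t*z.re := by
  have h : (-(t:ℂ)^2 - 2*(t:ℂ)*z) = Complex.ofReal (-t^2) + Complex.ofReal (-(2*t)) * z := by
    push_cast; ring
  rw [h, Complex.add_re, Complex.ofReal_re, Complex.mul_re, Complex.ofReal_re, Complex.ofReal_im]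
  ring

lemma norm_E (t : ℝ) (z : ℂ) :
    ‖Complex.exp (-(t:ℂ)^2 - 2*(t:ℂ)*z)‖ = Real.exp (-t^2 - 2*t*z.re) := by
  rw [Complex.norm_exp, Ere]

lemma sq_exp_le (t : ℝ) : t^2 * Real.exp (-(1/2) * t^2) ≤ 2 := by
  have h1 := Real.add_one_le_exp (t^2/2)
  have h2 : Real.exp (-(1/2) * t^2) = (Real.exp (t^2/2))⁻¹ := by
    rw [← Real.exp_neg]; congr 1; ring
  rw [h2]
  have h3 : (0:ℝ) < Real.exp (t^2/2) := Real.exp_pos _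
  rw [mul_inv_le_iff₀' h3]
  nlinarith [sq_nonneg t]

lemma norm_poly_E_le (c₀ c₂ : ℂ) (z : ℂ) (hz : 0 ≤ z.re) {t : ℝ} (ht : 0 ≤ t) :
    ‖(c₀ + c₂*(t:ℂ)^2) * Complex.exp (-(t:ℂ)^2 - 2*(t:ℂ)*z)‖ ≤
      (‖c₀‖ + 2*‖c₂‖) * Real.exp (-(1/2) * t^2) := by
  rw [norm_mul, norm_E]
  have h1 : ‖c₀ + c₂*(t:ℂ)^2‖ ≤ ‖c₀‖ + ‖c₂‖ * t^2 := by
    calc ‖c₀ + c₂*(t:ℂ)^2‖ ≤ ‖c₀‖ + ‖c₂*(t:ℂ)^2‖ := norm_add_le _ _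
      _ = ‖c₀‖ + ‖c₂‖ * t^2 := by
          rw [norm_mul]
          congr 2
          rw [norm_pow, Complex.norm_real, Real.norm_eq_abs, sq_abs]
  have h2 : Real.exp (-t^2 - 2*t*z.re) ≤ Real.exp (-t^2) :=
    Real.exp_le_exp.mpr (by nlinarith)
  have h3 : Real.exp (-t^2) = Real.exp (-(1/2)*t^2) * Real.exp (-(1/2)*t^2) := by
    rw [← Real.exp_add]; congr 1; ring
  have h4 : Real.exp (-(1/2)*t^2) ≤ 1 := Real.exp_le_one_iff.mpr (by nlinarith [sq_nonneg t])
  have h5 := sq_exp_le t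
  have e1 : (0:ℝ) < Real.exp (-(1/2)*t^2) := Real.exp_pos _
  have e2 : (0:ℝ) ≤ Real.exp (-t^2 - 2*t*z.re) := (Real.exp_pos _).le
  calc ‖c₀ + c₂*(t:ℂ)^2‖ * Real.exp (-t^2 - 2*t*z.re)
      ≤ (‖c₀‖ + ‖c₂‖ * t^2) * Real.exp (-t^2) :=
        mul_le_mul h1 h2 e2 (by positivity)
    _ = ‖c₀‖ * Real.exp (-t^2) + ‖c₂‖ * (t^2 * Real.exp (-(1/2)*t^2)) * Real.exp (-(1/2)*t^2) := by
        rw [h3]; ring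
    _ ≤ (‖c₀‖ + 2*‖c₂‖) * Real.exp (-(1/2) * t^2) := by
        have hc0 : ‖c₀‖ * Real.exp (-t^2) ≤ ‖c₀‖ * Real.exp (-(1/2)*t^2) := by
          apply mul_le_mul_of_nonneg_left _ (norm_nonneg _)
          apply Real.exp_le_exp.mpr; nlinarith [sq_nonneg t]
        have hc2 : ‖c₂‖ * (t^2 * Real.exp (-(1/2)*t^2)) * Real.exp (-(1/2)*t^2)
            ≤ ‖c₂‖ * 2 * Real.exp (-(1/2)*t^2) := by
          apply mul_le_mul_of_nonneg_right _ e1.le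
          exact mul_le_mul_of_nonneg_left h5 (norm_nonneg _)
        nlinarith
  
lemma integrable_poly_E (c₀ c₂ : ℂ) (z : ℂ) (hz : 0 ≤ z.re) :
    Integrable (fun t : ℝ => (c₀ + c₂*(t:ℂ)^2) * Complex.exp (-(t:ℂ)^2 - 2*(t:ℂ)*z))
      (volume.restrict (Ioi 0)) := by
  refine (((integrable_exp_neg_mul_sq (by norm_num : (0:ℝ) < 1/2)).const_mul
    (‖c₀‖ + 2*‖c₂‖)).restrict).mono'
    (Continuous.aestronglyMeasurable (by fun_prop)).restrict ?_
  rw [ae_restrict_iff' measurableSet_Ioi]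
  filter_upwards with t ht
  exact norm_poly_E_le c₀ c₂ z hz (le_of_lt ht)

lemma ftc2 (z : ℂ) (hz : 0 ≤ z.re) :
    (∫ t in Ioi (0:ℝ), ((2*z^2+1) + (-2)*(t:ℂ)^2) * Complex.exp (-(t:ℂ)^2 - 2*(t:ℂ)*z)) = z := by
  have key := integral_Ioi_of_hasDerivAt_of_tendsto' (a := 0)
    (f := fun t : ℝ => ((t:ℂ) - z) * Complex.exp (-(t:ℂ)^2 - 2*(t:ℂ)*z))
    (f' := fun t : ℝ => ((2*z^2+1) + (-2)*(t:ℂ)^2) * Complex.exp (-(t:ℂ)^2 - 2*(t:ℂ)*z))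
    (m := 0) ?_ (integrable_poly_E _ _ z hz) ?_
  · rw [key]; simp
  · intro t _
    have hid : HasDerivAt (fun t : ℝ => (t:ℂ)) 1 t := HasDerivAt.ofReal_comp (hasDerivAt_id t)
    have hinner : HasDerivAt (fun t : ℝ => -(t:ℂ)^2 - 2*(t:ℂ)*z) (-2*(t:ℂ) - 2*z) t := by
      have := ((hid.mul hid).neg).sub (((hid.mul_const z)).const_mul 2)
      convert this using 1
      · rfl
      · funext u; show _ = -((u:ℂ) * u) - 2 * ((u:ℂ) * z); ring
      · ring
    have := (hid.sub_const z).mul hinner.cexp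
    convert this using 1
    rfl; rfl; ring
  · -- tendsto 0
    have hg : Filter.Tendsto (fun t : ℝ => t * Real.exp (-t) + ‖z‖ * Real.exp (-t))
        Filter.atTop (𝓝 0) := by
      have h1 := tendsto_pow_mul_exp_neg_atTop_nhds_zero 1
      have h2 := tendsto_pow_mul_exp_neg_atTop_nhds_zero 0
      have h3 := (h2.const_mul ‖z‖)
      have := h1.add h3
      simpa using this
    refine squeeze_zero_norm' ?_ hg
    filter_upwards [Filter.eventually_ge_atTop (1:ℝ)] with t ht
    rw [norm_mul, norm_E]
    have h1 : ‖(t:ℂ) - z‖ ≤ t + ‖z‖ := by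
      calc ‖(t:ℂ) - z‖ ≤ ‖(t:ℂ)‖ + ‖z‖ := norm_sub_le _ _
        _ = |t| + ‖z‖ := by rw [Complex.norm_real, Real.norm_eq_abs]
        _ = t + ‖z‖ := by rw [abs_of_pos (by linarith)]
    have h2 : Real.exp (-t^2 - 2*t*z.re) ≤ Real.exp (-t) := by
      apply Real.exp_le_exp.mpr
      nlinarith
    calc ‖(t:ℂ) - z‖ * Real.exp (-t^2 - 2*t*z.re) ≤ (t + ‖z‖) * Real.exp (-t) := by
          apply mul_le_mul h1 h2 (Real.exp_pos _).le (by positivity)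
      _ = t * Real.exp (-t) + ‖z‖ * Real.exp (-t) := by ring


/-- Asymptotics of `Λ` in the closed right half-plane:
`Λ(z) = 1/(√π·z) + O(1/|z|²)` as `|z| → ∞` with `Re(z) ≥ 0`. -/
theorem Lam_asymptotics_right_halfplane :
    ∃ C > (0:ℝ), ∃ R > (0:ℝ), ∀ z : ℂ, 0 ≤ z.re → R ≤ ‖z‖ →
      ‖Lam z - 1 / ((Real.sqrt Real.pi : ℂ) * z)‖ ≤ C / ‖z‖ ^ 2 := by
  refine ⟨7, by norm_num, 1, by norm_num, ?_⟩
  intro z hre habs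
  have hz0 : z ≠ 0 := by
    intro h
    rw [h] at habs
    simp at habs
    linarith
  set E : ℝ → ℂ := fun t => Complex.exp (-(t:ℂ)^2 - 2*(t:ℂ)*z) with hE
  have hI : Integrable E (volume.restrict (Ioi 0)) := by
    have := integrable_poly_E 1 0 z hre
    simpa using this
  have hP := integrable_poly_E (2*z^2+1) (-2) z hre
  have hJint := integrable_poly_E (-1) 2 z hre
  set I : ℂ := ∫ t in Ioi (0:ℝ), E t with hIdef
  set J : ℂ := ∫ t in Ioi (0:ℝ), ((-1) + 2*(t:ℂ)^2) * E t with hJdef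
  have hJ : J = 2*z^2 * I - z := by
    have hsplit : (fun t : ℝ => ((-1) + 2*(t:ℂ)^2) * E t) =
        (fun t : ℝ => (2*z^2) * E t - ((2*z^2+1) + (-2)*(t:ℂ)^2) * E t) := by
      funext t; ring
    rw [hJdef, hsplit, integral_sub (hI.const_mul _) hP, MeasureTheory.integral_const_mul, ftc2 z hre]
  have hfinal : Lam z - 1/((Real.sqrt Real.pi : ℂ)*z) = J / (((Real.sqrt Real.pi : ℝ):ℂ) * z^2) := by
    rw [Lam_eq z, ← hIdef, hJ]
    field_simp [sqrt_pi_ne, hz0]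
  rw [hfinal, norm_div, norm_mul, norm_pow, Complex.norm_real, Real.norm_eq_abs,
    abs_of_nonneg (Real.sqrt_nonneg _)]
  have hJb : ‖J‖ ≤ 7 := by
    have h1 : ‖J‖ ≤ ∫ t in Ioi (0:ℝ), 5 * Real.exp (-(1/2)*t^2) := by
      apply MeasureTheory.norm_integral_le_of_norm_le
        (((integrable_exp_neg_mul_sq (by norm_num : (0:ℝ) < 1/2)).const_mul 5).restrict)
      rw [ae_restrict_iff' measurableSet_Ioi]
      filter_upwards with t ht
      have := norm_poly_E_le (-1) 2 z hre (le_of_lt ht)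
      calc ‖((-1) + 2*(t:ℂ)^2) * E t‖ ≤ (‖(-1:ℂ)‖ + 2*‖(2:ℂ)‖) * Real.exp (-(1/2)*t^2) := this
        _ = 5 * Real.exp (-(1/2)*t^2) := by norm_num
    have h2 : (∫ t in Ioi (0:ℝ), 5 * Real.exp (-(1/2)*t^2)) = 5 * (Real.sqrt (Real.pi/(1/2))/2) := by
      rw [MeasureTheory.integral_const_mul, integral_gaussian_Ioi]
    have h3 : Real.sqrt (Real.pi/(1/2)) ≤ 2.8 := by
      have hs := Real.sq_sqrt (by positivity : (0:ℝ) ≤ Real.pi/(1/2))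
      have hn := Real.sqrt_nonneg (Real.pi/(1/2))
      nlinarith [Real.pi_lt_d2]
    rw [h2] at h1
    linarith
  have habs1 : (0:ℝ) < ‖z‖ := lt_of_lt_of_le one_pos habs
  have hz2 : (0:ℝ) < ‖z‖ ^ 2 := by positivity
  have hsp : (1:ℝ) ≤ Real.sqrt Real.pi := by
    rw [show (1:ℝ) = Real.sqrt 1 from (Real.sqrt_one).symm]
    exact Real.sqrt_le_sqrt (by linarith [Real.pi_gt_three])
  rw [div_le_div_iff₀ (by positivity) hz2]
  nlinarith [norm_nonneg J]
end

section
/- The function Λ admits the everywhere convergent power series representation Λ(z) = Σₙ₌₀^∞ (−1)ⁿ·zⁿ/Γ(n/2 + 1) for all z ∈ ℂ, where Γ denotes the Gamma function. -/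
open Complex Finset Nat MeasureTheory

lemma hasSum_exp_div (w : ℂ) : HasSum (fun n => w ^ n / (n ! : ℂ)) (Complex.exp w) := by
  have h := NormedSpace.exp_series_hasSum_exp' (𝕂 := ℂ) w
  rw [← Complex.exp_eq_exp_ℂ] at h
  simpa [smul_eq_mul, div_eq_inv_mul] using h

lemma int_pow_c (n : ℕ) : (∫ s in (0:ℝ)..1, ((s:ℂ))^n) = 1/((n:ℂ)+1) := by
  have h : ∀ s : ℝ, ((s:ℂ))^n = ((s^n : ℝ) : ℂ) := by intro s; push_cast; ring
  simp_rw [h]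
  rw [intervalIntegral.integral_ofReal, integral_pow]
  push_cast
  simp

lemma hasSum_integral (z : ℂ) :
    HasSum (fun k : ℕ => (-1)^k * z^(2*k+1) / ((k ! : ℂ) * (2*k+1)))
      (∫ s in (0:ℝ)..1, z * Complex.exp (-((s : ℂ) * z) ^ 2)) := by
  rw [intervalIntegral.integral_of_le zero_le_one]
  set F : ℕ → ℝ → ℂ := fun k s => ((-1)^k * z^(2*k+1) / (k ! : ℂ)) * ((s:ℂ))^(2*k) with hF
  have hFcont : ∀ k, Continuous (F k) := by
    intro k
    exact continuous_const.mul ((Complex.continuous_ofReal.pow _))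
  have hFint : ∀ k, IntegrableOn (F k) (Set.Ioc (0:ℝ) 1) := fun k =>
    (hFcont k).integrableOn_Ioc
  have hnormle : ∀ k, (∫ s in Set.Ioc (0:ℝ) 1, ‖F k s‖) ≤ ‖z‖^(2*k+1) / (k ! : ℝ) := by
    intro k
    have h1 : ∀ s ∈ Set.Ioc (0:ℝ) 1, ‖F k s‖ ≤ ‖z‖^(2*k+1) / (k ! : ℝ) := by
      intro s hs
      have hs0 : 0 ≤ s := le_of_lt hs.1
      have : ‖F k s‖ = (‖z‖^(2*k+1) / (k ! : ℝ)) * s^(2*k) := by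
        simp [hF, norm_mul, norm_div, norm_pow, Complex.norm_real,
          Real.norm_eq_abs, _root_.abs_of_nonneg hs0]
      rw [this]
      have hsle : s^(2*k) ≤ 1 := pow_le_one₀ hs0 hs.2
      have hnn : 0 ≤ ‖z‖^(2*k+1) / (k ! : ℝ) := by positivity
      nlinarith
    calc (∫ s in Set.Ioc (0:ℝ) 1, ‖F k s‖)
        ≤ ∫ _ in Set.Ioc (0:ℝ) 1, ‖z‖^(2*k+1) / (k ! : ℝ) := by
          apply setIntegral_mono_on ((hFcont k).norm.integrableOn_Ioc)
            (integrableOn_const (by simp) (by simp)) measurableSet_Ioc h1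
      _ = ‖z‖^(2*k+1) / (k ! : ℝ) := by simp
  have hsum : Summable fun k => ∫ s in Set.Ioc (0:ℝ) 1, ‖F k s‖ := by
    apply Summable.of_nonneg_of_le (fun k => integral_nonneg (fun s => norm_nonneg _)) hnormle
    have : Summable fun k : ℕ => ‖z‖ * (‖z‖^2)^k / (k ! : ℝ) := by
      simpa [mul_div_assoc] using (Real.summable_pow_div_factorial (‖z‖^2)).mul_left ‖z‖
    apply this.congr
    intro k
    rw [pow_add, pow_mul, pow_one]
    ring
  have key := MeasureTheory.hasSum_integral_of_summable_integral_norm hFint hsum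
  have hts : ∀ s : ℝ, (∑' k, F k s) = z * Complex.exp (-((s : ℂ) * z) ^ 2) := by
    intro s
    have h := (hasSum_exp_div (-((s : ℂ) * z) ^ 2)).mul_left z
    have : (fun k => z * ((-((s : ℂ) * z) ^ 2) ^ k / (k ! : ℂ))) = fun k => F k s := by
      funext k
      simp only [hF]
      rw [neg_pow, mul_pow, mul_pow, ← pow_mul, ← pow_mul, pow_add, pow_one]
      ring
    rw [this] at h
    exact h.tsum_eq
  have hint : ∀ k, (∫ s in Set.Ioc (0:ℝ) 1, F k s) = (-1)^k * z^(2*k+1) / ((k ! : ℂ) * (2*k+1)) := by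
    intro k
    rw [show (∫ s in Set.Ioc (0:ℝ) 1, F k s) = ∫ s in (0:ℝ)..1, F k s by
      rw [intervalIntegral.integral_of_le zero_le_one]]
    simp only [hF]
    rw [intervalIntegral.integral_const_mul, int_pow_c]
    push_cast
    field_simp
  simp_rw [hts] at key
  have heq : (fun k => ∫ s in Set.Ioc (0:ℝ) 1, F k s)
      = fun k => (-1)^k * z^(2*k+1) / ((k ! : ℂ) * (2*k+1)) := funext hint
  rw [heq] at key
  exact key

lemma lemL : ∀ (m : ℕ) (x : ℂ), (∀ i : ℕ, i ≤ m → x + i ≠ 0) →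
    ∑ j ∈ range (m+1), (-1)^j * (m.choose j : ℂ) / (x + j)
      = (m ! : ℂ) / ∏ i ∈ range (m+1), (x + i) := by
  intro m
  induction m with
  | zero => intro x hx; simp
  | succ m ih =>
    intro x hx
    have hx0 : x ≠ 0 := by simpa using hx 0 (by omega)
    have hxm : ∀ i : ℕ, i ≤ m → x + (i:ℂ) ≠ 0 := fun i hi => hx i (by omega)
    have hx1 : ∀ i : ℕ, i ≤ m → (x + 1) + (i:ℂ) ≠ 0 := by
      intro i hi h
      exact hx (i+1) (by omega) (by push_cast; rw [← h]; ring)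
    have ihx := ih x hxm
    have ihx1 := ih (x+1) hx1
    set Q0 : ℂ := ∏ i ∈ range (m+1), (x + i) with hQ0
    set Q1 : ℂ := ∏ i ∈ range (m+1), ((x+1) + i) with hQ1
    have hQ0ne : Q0 ≠ 0 :=
      Finset.prod_ne_zero_iff.2 (fun i hi => hxm i (Finset.mem_range_succ_iff.1 hi))
    have hQ1ne : Q1 ≠ 0 :=
      Finset.prod_ne_zero_iff.2 (fun i hi => hx1 i (Finset.mem_range_succ_iff.1 hi))
    have hQa : ∏ i ∈ range (m+2), (x + (i:ℂ)) = Q0 * (x + ((m:ℂ)+1)) := by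
      rw [Finset.prod_range_succ, hQ0]
      push_cast
      ring
    have hQb : ∏ i ∈ range (m+2), (x + (i:ℂ)) = x * Q1 := by
      rw [Finset.prod_range_succ']
      have h1 : ∀ i ∈ range (m+1), (x + (((i+1:ℕ)):ℂ)) = (x+1) + (i:ℂ) := by
        intro i _; push_cast; ring
      rw [Finset.prod_congr rfl h1, ← hQ1]
      push_cast
      ring
    have hxQ : x * Q1 = Q0 * (x + ((m:ℂ)+1)) := by rw [← hQb, hQa]
    have hS2 : ∑ i ∈ range (m+1), (-1)^i * (m.choose (i+1) : ℂ) / (x + ((i+1:ℕ):ℂ))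
        = 1/x - (m ! : ℂ)/Q0 := by
      have h1 := ihx
      rw [Finset.sum_range_succ'] at h1
      have h2 : ∀ i ∈ range m, (-1:ℂ)^(i+1) * (m.choose (i+1) : ℂ) / (x + ((i+1:ℕ):ℂ))
          = -((-1)^i * (m.choose (i+1) : ℂ) / (x + ((i+1:ℕ):ℂ))) := by
        intro i _; rw [pow_succ]; ring
      rw [Finset.sum_congr rfl h2, Finset.sum_neg_distrib] at h1
      simp only [pow_zero, Nat.choose_zero_right, Nat.cast_one, Nat.cast_zero, add_zero,
        one_mul] at h1
      rw [Finset.sum_range_succ, Nat.choose_succ_self]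
      simp only [Nat.cast_zero, zero_div, mul_zero, add_zero, one_div]
      linear_combination -h1
    rw [Finset.sum_range_succ']
    have hsplit : ∀ i ∈ range (m+1), (-1:ℂ)^(i+1) * (((m+1).choose (i+1) : ℕ) : ℂ) / (x + ((i+1:ℕ):ℂ))
        = -((-1)^i * (m.choose i : ℂ) / ((x+1) + i)) - (-1)^i * (m.choose (i+1) : ℂ) / (x + ((i+1:ℕ):ℂ)) := by
      intro i _
      rw [Nat.choose_succ_succ']
      push_cast
      rw [pow_succ]
      have h3 : x + ((i:ℂ)+1) = (x+1) + i := by ring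
      rw [h3]
      ring
    rw [Finset.sum_congr rfl hsplit, Finset.sum_sub_distrib, Finset.sum_neg_distrib,
      ihx1, hS2, hQa]
    simp only [pow_zero, Nat.choose_zero_right, Nat.cast_one, Nat.cast_zero, add_zero, one_mul]
    rw [Nat.factorial_succ]
    have hxm1 : x + ((m:ℂ)+1) ≠ 0 := by
      have := hx (m+1) le_rfl
      push_cast at this
      exact this
    have key : (m ! : ℂ)/Q0 - (m ! : ℂ)/Q1 = (((m:ℂ)+1) * (m ! : ℂ)) / (Q0 * (x + ((m:ℂ)+1))) := by
      rw [div_sub_div _ _ hQ0ne hQ1ne,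
        div_eq_div_iff (mul_ne_zero hQ0ne hQ1ne) (mul_ne_zero hQ0ne hxm1)]
      linear_combination ((m ! : ℂ) * Q0) * hxQ
    push_cast
    linear_combination key

lemma sqrt_pi_c : ((Real.sqrt Real.pi : ℝ) : ℂ) = Complex.Gamma (1/2) := by
  rw [Complex.Gamma_one_half_eq]
  rw [Real.sqrt_eq_rpow, Complex.ofReal_cpow Real.pi_pos.le]
  norm_num

lemma gamma_half_prod (m : ℕ) :
    Complex.Gamma ((m:ℂ) + 1/2 + 1)
      = (∏ i ∈ range (m+1), ((i:ℂ) + 1/2)) * ((Real.sqrt Real.pi : ℝ) : ℂ) := by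
  induction m with
  | zero =>
    simp only [Nat.cast_zero, zero_add, Finset.prod_range_one]
    rw [Complex.Gamma_add_one (1/2) (by norm_num), sqrt_pi_c]
  | succ m ih =>
    have hne : (m:ℂ) + 1/2 + 1 ≠ 0 := by
      intro h
      have := congrArg Complex.re h
      simp [Complex.add_re] at this
      nlinarith [Nat.cast_nonneg (α := ℝ) m, this]
    have h1 : ((m+1 : ℕ):ℂ) + 1/2 + 1 = ((m:ℂ) + 1/2 + 1) + 1 := by push_cast; ring
    rw [Finset.prod_range_succ, h1, Complex.Gamma_add_one _ hne, ih]
    push_cast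
    ring

lemma prod_half_ne (m : ℕ) : (∏ i ∈ range (m+1), ((i:ℂ) + 1/2)) ≠ 0 := by
  apply Finset.prod_ne_zero_iff.2
  intro i _
  intro h
  have := congrArg Complex.re h
  simp at this
  nlinarith [Nat.cast_nonneg (α := ℝ) i, this]

lemma key_sum (m : ℕ) :
    ∑ j ∈ range (m+1), (-1:ℂ)^j / ((((m-j)! : ℕ) : ℂ) * ((j ! : ℕ) : ℂ) * (2*(j:ℂ)+1))
      = 1 / (2 * ∏ i ∈ range (m+1), ((i:ℂ) + 1/2)) := by
  have hx : ∀ i : ℕ, i ≤ m → (1/2 : ℂ) + i ≠ 0 := by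
    intro i _ h
    have h2 := congrArg Complex.re h
    simp at h2
    nlinarith [Nat.cast_nonneg (α := ℝ) i]
  have hL := lemL m (1/2) hx
  have hprod : ∏ i ∈ range (m+1), ((1/2:ℂ) + i) = ∏ i ∈ range (m+1), ((i:ℂ) + 1/2) :=
    Finset.prod_congr rfl (fun i _ => by ring)
  rw [hprod] at hL
  have hnem : ((m ! : ℕ):ℂ) ≠ 0 := Nat.cast_ne_zero.2 (Nat.factorial_ne_zero m)
  have hterm : ∀ j ∈ range (m+1), (-1:ℂ)^j / ((((m-j)!:ℕ):ℂ) * ((j !:ℕ):ℂ) * (2*(j:ℂ)+1))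
      = (1/(2*((m !:ℕ):ℂ))) * ((-1)^j * (m.choose j : ℂ) / ((1/2:ℂ) + j)) := by
    intro j hj
    have hj' : j ≤ m := Finset.mem_range_succ_iff.1 hj
    have hch : ((m.choose j : ℕ) : ℂ) * ((j ! : ℕ):ℂ) * (((m-j)! : ℕ):ℂ) = ((m ! : ℕ) : ℂ) := by
      norm_cast
      exact Nat.choose_mul_factorial_mul_factorial hj'
    have hne1 : ((j ! : ℕ):ℂ) ≠ 0 := Nat.cast_ne_zero.2 (Nat.factorial_ne_zero j)
    have hne2 : (((m-j)! : ℕ):ℂ) ≠ 0 := Nat.cast_ne_zero.2 (Nat.factorial_ne_zero _)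
    have hhalf : (1/2:ℂ) + j ≠ 0 := hx j hj'
    have h2j : (2*(j:ℂ)+1) ≠ 0 := by
      intro h
      have h2 := congrArg Complex.re h
      simp at h2
      nlinarith [Nat.cast_nonneg (α := ℝ) j]
    rw [_root_.div_mul_div_comm, one_mul, div_eq_div_iff
      (mul_ne_zero (mul_ne_zero hne2 hne1) h2j)
      (mul_ne_zero (mul_ne_zero two_ne_zero hnem) hhalf)]
    linear_combination (-(-1:ℂ)^j * (2*(j:ℂ)+1)) * hch
  rw [Finset.sum_congr rfl hterm, ← Finset.mul_sum, hL]
  have hP : (∏ i ∈ range (m+1), ((i:ℂ) + 1/2)) ≠ 0 := prod_half_ne m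
  rw [_root_.div_mul_div_comm, one_mul, div_eq_div_iff
    (mul_ne_zero (mul_ne_zero two_ne_zero hnem) hP)
    (mul_ne_zero two_ne_zero hP)]
  ring

lemma sum_two_mul (f : ℕ → ℂ) (m : ℕ) :
    ∑ i ∈ range (2*m), f i = ∑ u ∈ range m, (f (2*u) + f (2*u+1)) := by
  induction m with
  | zero => simp
  | succ m ih =>
    have h : 2*(m+1) = (2*m+1)+1 := by ring
    rw [h, Finset.sum_range_succ, Finset.sum_range_succ, Finset.sum_range_succ, ih]
    ring

/-- The everywhere convergent power series representation
`Λ(z) = Σₙ (−1)ⁿ·zⁿ/Γ(n/2 + 1)` for all `z ∈ ℂ`. -/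
theorem Lam_power_series (z : ℂ) :
    HasSum (fun n : ℕ => (-1) ^ n * z ^ n / Complex.Gamma ((n : ℂ) / 2 + 1)) (Lam z) := by
  set sq : ℂ := ((Real.sqrt Real.pi : ℝ) : ℂ) with hsqdef
  have hsqne : sq ≠ 0 :=
    Complex.ofReal_ne_zero.2 (ne_of_gt (Real.sqrt_pos.2 Real.pi_pos))
  -- first factor
  set u : ℕ → ℂ := fun n => if Even n then ((((n/2)! : ℕ)):ℂ)⁻¹ * z^n else 0 with hu
  have hinj2 : Function.Injective (fun k : ℕ => 2*k) := fun a b h => by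
    have h' : 2*a = 2*b := h
    omega
  have hu0 : ∀ n, ¬ Even n → u n = 0 := by intro n hn; simp [hu, hn]
  have hucomp : (fun k => u (2*k)) = fun k => (z^2)^k / (k ! : ℂ) := by
    funext k
    show (if Even (2*k) then ((((2*k/2)! : ℕ)):ℂ)⁻¹ * z^(2*k) else 0) = (z^2)^k / (k ! : ℂ)
    have he : Even (2*k) := ⟨k, two_mul k⟩
    simp only [he, if_true]
    rw [Nat.mul_div_cancel_left k (by norm_num), pow_mul]
    ring
  have hU : HasSum u (Complex.exp (z^2)) := by
    have := hasSum_exp_div (z^2)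
    rw [← hucomp] at this
    exact (Function.Injective.hasSum_iff hinj2 (by
      intro n hn
      apply hu0
      rintro ⟨k, hk⟩
      exact hn ⟨k, show 2*k = n by omega⟩)).1 this
  have hUnorm : Summable (fun n => ‖u n‖) := by
    apply (Function.Injective.summable_iff hinj2 (by
      intro n hn
      rw [hu0 n (by rintro ⟨k, hk⟩; exact hn ⟨k, show 2*k = n by omega⟩), norm_zero])).1
    have : Summable (fun k : ℕ => ‖z^2‖^k / (k ! : ℝ)) := Real.summable_pow_div_factorial _
    apply this.congr
    intro k
    show ‖z^2‖^k / (k ! : ℝ) = ‖u (2*k)‖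
    rw [show u (2*k) = (z^2)^k / (k ! : ℂ) from congrFun hucomp k]
    simp [norm_div, norm_pow]
  -- second factor
  set v1 : ℕ → ℂ := fun n =>
    if Odd n then (-(2/sq)) * ((-1)^(n/2) * z^n / ((((n/2)! : ℕ) : ℂ) * n)) else 0 with hv1
  set v : ℕ → ℂ := fun n => (if n = 0 then (1:ℂ) else 0) + v1 n with hv
  have hinj21 : Function.Injective (fun k : ℕ => 2*k+1) := fun a b h => by
    have h' : 2*a+1 = 2*b+1 := h
    omega
  have hv10 : ∀ n, ¬ Odd n → v1 n = 0 := by intro n hn; simp [hv1, hn]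
  have hv1comp : (fun k => v1 (2*k+1))
      = fun k => (-(2/sq)) * ((-1)^k * z^(2*k+1) / ((k ! : ℂ) * (2*(k:ℂ)+1))) := by
    funext k
    show (if Odd (2*k+1) then (-(2/sq)) * ((-1)^((2*k+1)/2) * z^(2*k+1) / (((((2*k+1)/2)! : ℕ) : ℂ) * ((2*k+1 : ℕ):ℂ))) else 0) = _
    have ho : Odd (2*k+1) := ⟨k, rfl⟩
    simp only [ho, if_true]
    rw [show (2*k+1)/2 = k by omega]
    push_cast
    ring
  have hV1 : HasSum v1 ((-(2/sq)) * ∫ s in (0:ℝ)..1, z * Complex.exp (-((s : ℂ) * z) ^ 2)) := by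
    have h2 := (hasSum_integral z).mul_left (-(2/sq))
    rw [← hv1comp] at h2
    exact (Function.Injective.hasSum_iff hinj21 (by
      intro n hn
      apply hv10
      rintro ⟨k, hk⟩
      exact hn ⟨k, show 2*k+1 = n by omega⟩)).1 h2
  have hV : HasSum v (1 - (2/sq) * ∫ s in (0:ℝ)..1, z * Complex.exp (-((s : ℂ) * z) ^ 2)) := by
    have := (hasSum_ite_eq 0 (1:ℂ)).add hV1
    rw [hv]
    convert this using 1
    ring
  have hVnorm : Summable (fun n => ‖v n‖) := by
    apply Summable.of_nonneg_of_le (fun n => norm_nonneg _)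
      (fun n => norm_add_le _ _)
    apply Summable.add
    · apply summable_of_ne_finset_zero (s := {0})
      intro n hn
      simp only [Finset.mem_singleton] at hn
      simp [hn]
    · apply (Function.Injective.summable_iff hinj21 (by
        intro n hn
        rw [hv10 n (by rintro ⟨k, hk⟩; exact hn ⟨k, show 2*k+1 = n by omega⟩), norm_zero])).1
      have hs : Summable (fun k : ℕ => ‖(2:ℂ)/sq‖ * (‖z‖ * (‖z‖^2)^k / (k ! : ℝ))) := by
        exact ((Real.summable_pow_div_factorial (‖z‖^2)).mul_left ‖z‖ |>.congr
          (by intro k; rw [mul_div_assoc])).mul_left _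
      apply Summable.of_nonneg_of_le (fun k => norm_nonneg _) _ hs
      intro k
      show ‖v1 (2*k+1)‖ ≤ _
      rw [congrFun hv1comp k]
      rw [norm_mul, norm_neg]
      have h1 : ‖(-1:ℂ)^k * z^(2*k+1) / ((k ! : ℂ) * (2*(k:ℂ)+1))‖
          ≤ ‖z‖ * (‖z‖^2)^k / (k ! : ℝ) := by
        rw [norm_div, norm_mul, norm_mul, norm_pow, norm_neg, norm_one, one_pow, one_mul]
        have e1 : ‖((k ! : ℕ) : ℂ)‖ = (k ! : ℝ) := by
          rw [Complex.norm_natCast]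
        have e2 : ‖(2*(k:ℂ)+1)‖ = (2*k+1 : ℝ) := by
          rw [show (2*(k:ℂ)+1) = (((2*k+1 : ℕ)):ℂ) by push_cast; ring, Complex.norm_natCast]
          push_cast; ring
        rw [e1, e2, norm_pow]
        rw [div_le_div_iff₀ (by positivity) (by positivity)]
        have hz : ‖z‖^(2*k+1) = ‖z‖ * (‖z‖^2)^k := by
          rw [← pow_mul, pow_add, pow_one]; ring
        rw [hz]
        have : (0:ℝ) ≤ ‖z‖ * (‖z‖^2)^k * (k ! : ℝ) := by positivity
        nlinarith [(Nat.cast_pos (α := ℝ)).2 (Nat.factorial_pos k),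
          Nat.cast_nonneg (α := ℝ) k]
      exact mul_le_mul_of_nonneg_left h1 (norm_nonneg _)
  -- Cauchy product
  have hprod : Lam z = ∑' n, ∑ kl ∈ Finset.HasAntidiagonal.antidiagonal n, u kl.1 * v kl.2 := by
    rw [Lam, ← hU.tsum_eq, ← hV.tsum_eq]
    exact tsum_mul_tsum_eq_tsum_sum_antidiagonal_of_summable_norm hUnorm hVnorm
  have hsummable : Summable (fun n => ∑ kl ∈ Finset.HasAntidiagonal.antidiagonal n, u kl.1 * v kl.2) :=
    (summable_norm_sum_mul_antidiagonal_of_summable_norm hUnorm hVnorm).of_norm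
  have hHS : HasSum (fun n => ∑ kl ∈ Finset.HasAntidiagonal.antidiagonal n, u kl.1 * v kl.2) (Lam z) := by
    rw [hprod]
    exact hsummable.hasSum
  -- identify coefficients
  have hv1zero : v1 0 = 0 := hv10 0 (by simp)
  have hcoeff : ∀ n, (∑ kl ∈ Finset.HasAntidiagonal.antidiagonal n, u kl.1 * v kl.2)
      = (-1) ^ n * z ^ n / Complex.Gamma ((n : ℂ) / 2 + 1) := by
    intro n
    rcases Nat.even_or_odd n with ⟨m, hm⟩ | ⟨m, hm⟩
    · -- even case : n = m + m
      subst hm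
      have hgam : Complex.Gamma (((m+m : ℕ) : ℂ)/2 + 1) = ((m ! : ℕ) : ℂ) := by
        rw [show ((((m+m : ℕ)):ℂ)/2 + 1) = ((m:ℂ) + 1) by push_cast; ring]
        exact_mod_cast Complex.Gamma_nat_eq_factorial m
      rw [hgam]
      have hsingle : (∑ kl ∈ Finset.HasAntidiagonal.antidiagonal (m+m), u kl.1 * v kl.2)
          = u (m+m) * v 0 := by
        apply Finset.sum_eq_single (m+m, 0)
        · rintro ⟨k, l⟩ hmem hne
          rw [Finset.HasAntidiagonal.mem_antidiagonal] at hmem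
          rcases Nat.even_or_odd l with hl | hl
          · have hl0 : l ≠ 0 := by
              intro h0
              subst h0
              apply hne
              simp only [add_zero] at hmem
              simp [Prod.ext_iff, hmem]
            have : v l = 0 := by
              rw [hv]
              simp only [if_neg hl0, zero_add]
              exact hv10 l (Nat.not_odd_iff_even.2 hl)
            simp [this]
          · have hk : ¬ Even k := by
              rw [Nat.even_iff]
              rw [Nat.odd_iff] at hl
              omega
            simp [hu0 k hk]
        · intro h
          exact absurd (Finset.HasAntidiagonal.mem_antidiagonal.2 (by simp)) h
      rw [hsingle]
      have hueval : u (m+m) = (((m ! : ℕ)):ℂ)⁻¹ * z^(m+m) := by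
        rw [hu]
        have he : Even (m+m) := ⟨m, rfl⟩
        simp only [he, if_true]
        rw [show (m+m)/2 = m by omega]
      have hveval : v 0 = 1 := by rw [hv]; simp [hv1zero]
      rw [hueval, hveval, Even.neg_one_pow (⟨m, rfl⟩ : Even (m+m))]
      ring
    · -- odd case : n = 2*m + 1
      subst hm
      have hgam : Complex.Gamma (((2*m+1 : ℕ) : ℂ)/2 + 1)
          = (∏ i ∈ range (m+1), ((i:ℂ) + 1/2)) * sq := by
        rw [show ((((2*m+1 : ℕ)):ℂ)/2 + 1) = ((m:ℂ) + 1/2 + 1) by push_cast; ring]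
        rw [gamma_half_prod m, ← hsqdef]
      rw [hgam, Finset.Nat.sum_antidiagonal_eq_sum_range_succ_mk,
        show (2*m+1).succ = 2*(m+1) by omega, sum_two_mul]
      have hterm : ∀ t ∈ range (m+1),
          (u (2*t) * v (2*m+1 - 2*t) + u (2*t+1) * v (2*m+1 - (2*t+1)))
          = (-(2/sq) * z^(2*m+1)) *
            ((-1:ℂ)^(m-t) / (((t ! : ℕ):ℂ) * (((m-t)! : ℕ):ℂ) * (2*((m-t:ℕ):ℂ)+1))) := by
        intro t ht
        have ht' : t ≤ m := Finset.mem_range_succ_iff.1 ht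
        have hodd : ¬ Even (2*t+1) := by rw [Nat.even_iff]; omega
        rw [hu0 _ hodd, zero_mul, add_zero]
        have hsub : 2*m+1 - 2*t = 2*(m-t)+1 := by omega
        rw [hsub]
        have hueval : u (2*t) = ((t ! : ℕ):ℂ)⁻¹ * z^(2*t) := by
          rw [hu]
          have he : Even (2*t) := ⟨t, two_mul t⟩
          simp only [he, if_true]
          rw [show (2*t)/2 = t by omega]
        have hveval : v (2*(m-t)+1)
            = (-(2/sq)) * ((-1)^(m-t) * z^(2*(m-t)+1) /
                ((((m-t)! : ℕ) : ℂ) * ((2*(m-t)+1 : ℕ):ℂ))) := by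
          rw [hv]
          have h0 : ¬ (2*(m-t)+1 = 0) := by omega
          have ho : Odd (2*(m-t)+1) := ⟨m-t, rfl⟩
          simp only [h0, if_false, zero_add, hv1, ho, if_true]
          rw [show (2*(m-t)+1)/2 = m-t by omega]
        have hzp : z^(2*t) * z^(2*(m-t)+1) = z^(2*m+1) := by
          rw [← pow_add]
          congr 1
          omega
        have hne1 : ((t ! : ℕ):ℂ) ≠ 0 := Nat.cast_ne_zero.2 (Nat.factorial_ne_zero t)
        have hne2 : (((m-t)! : ℕ):ℂ) ≠ 0 := Nat.cast_ne_zero.2 (Nat.factorial_ne_zero _)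
        have hne3 : (2*((m-t:ℕ):ℂ)+1) ≠ 0 := by
          intro h
          have h2 := congrArg Complex.re h
          simp at h2
          nlinarith [Nat.cast_nonneg (α := ℝ) (m-t), h2]
        rw [hueval, hveval,
          show ((2*(m-t)+1 : ℕ):ℂ) = 2*((m-t:ℕ):ℂ)+1 by push_cast; ring,
          ← hzp]
        field_simp
      rw [Finset.sum_congr rfl hterm, ← Finset.mul_sum]
      have hreflect := Finset.sum_range_reflect
        (fun j => (-1:ℂ)^j / ((((m-j)! : ℕ):ℂ) * ((j ! : ℕ):ℂ) * (2*((j:ℕ):ℂ)+1))) (m+1)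
      have hrw : ∀ t ∈ range (m+1),
          (-1:ℂ)^(m+1-1-t) / ((((m-(m+1-1-t))! : ℕ):ℂ) * (((m+1-1-t) ! : ℕ):ℂ)
            * (2*(((m+1-1-t):ℕ):ℂ)+1))
          = (-1:ℂ)^(m-t) / (((t ! : ℕ):ℂ) * (((m-t)! : ℕ):ℂ) * (2*((m-t:ℕ):ℂ)+1)) := by
        intro t ht
        have ht' : t ≤ m := Finset.mem_range_succ_iff.1 ht
        have h1 : m+1-1-t = m-t := by omega
        have h2 : m-(m-t) = t := by omega
        rw [h1, h2]
      rw [← Finset.sum_congr rfl hrw, hreflect]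
      have hks : ∑ j ∈ range (m+1),
          (-1:ℂ)^j / ((((m-j)! : ℕ):ℂ) * ((j ! : ℕ):ℂ) * (2*((j:ℕ):ℂ)+1))
          = 1 / (2 * ∏ i ∈ range (m+1), ((i:ℂ) + 1/2)) := key_sum m
      rw [hks]
      have hP : (∏ i ∈ range (m+1), ((i:ℂ) + 1/2)) ≠ 0 := prod_half_ne m
      rw [Odd.neg_one_pow (⟨m, rfl⟩ : Odd (2*m+1))]
      rw [mul_one_div, div_eq_div_iff (mul_ne_zero two_ne_zero hP) (mul_ne_zero hP hsqne)]
      have hre : -(2/sq) * z^(2*m+1) * ((∏ i ∈ range (m+1), ((i:ℂ) + 1/2)) * sq)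
          = -2 * z^(2*m+1) * (∏ i ∈ range (m+1), ((i:ℂ) + 1/2)) * (sq⁻¹ * sq) := by
        ring
      rw [hre, inv_mul_cancel₀ hsqne]
      ring
  have := funext hcoeff
  rw [this] at hHS
  exact hHS
end

section
/- For every ω ∈ ℂ the function φ(t,x) := exp(−x²/(4it))·Λ(|x|/(2·√(it)) + ω·√(it)) satisfies the free Schrödinger equation i·∂φ/∂t(t,x) = −∂²φ/∂x²(t,x) for all t > 0 and all x ∈ ℝ \ {0}. -/
/-- For `t > 0`, the principal square root of `i·t`, namely `√t·(1+i)/√2`. -/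
noncomputable def sqrtit (t : ℝ) : ℂ :=
  (Real.sqrt t : ℂ) * (1 + Complex.I) / (Real.sqrt 2 : ℂ)


/-- `φ(t,x) = exp(−x²/(4it))·Λ(|x|/(2√(it)) + ω√(it))`. -/
noncomputable def phiOmega (ω : ℂ) (t x : ℝ) : ℂ :=
  Complex.exp (-(x : ℂ) ^ 2 / (4 * Complex.I * t)) *
    Lam (((|x| : ℝ) : ℂ) / (2 * sqrtit t) + ω * sqrtit t)

open Complex MeasureTheory Metric intervalIntegral

noncomputable def erfInt (z : ℂ) : ℂ := ∫ s in (0:ℝ)..1, z * Complex.exp (-((s : ℂ) * z) ^ 2)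

lemma F_hasDerivAt (c z : ℂ) :
    HasDerivAt (fun z : ℂ => z * Complex.exp (-(c * z) ^ 2))
      ((1 - 2 * c ^ 2 * z ^ 2) * Complex.exp (-(c * z) ^ 2)) z := by
  have h1 : HasDerivAt (fun z : ℂ => -(c * z) ^ 2) (-(2 * (c * z) * c)) z := by
    have := (((hasDerivAt_id z).const_mul c).pow 2).neg
    refine this.congr_deriv (Eq.symm ?_)
    simp only [id]
    ring
  have h3 := (hasDerivAt_id z).mul h1.cexp
  refine h3.congr_deriv (Eq.symm ?_)
  simp only [id]
  ring

lemma hasDerivAt_erfInt (z₀ : ℂ) : HasDerivAt erfInt (Complex.exp (-z₀ ^ 2)) z₀ := by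
  set R : ℝ := ‖z₀‖ + 1 with hR
  have hRpos : 0 < R := by positivity
  have key := intervalIntegral.hasDerivAt_integral_of_dominated_loc_of_deriv_le
    (F := fun (z : ℂ) (s : ℝ) => z * Complex.exp (-((s : ℂ) * z) ^ 2))
    (F' := fun (z : ℂ) (s : ℝ) => (1 - 2 * (s : ℂ) ^ 2 * z ^ 2) * Complex.exp (-((s : ℂ) * z) ^ 2))
    (μ := volume) (a := (0:ℝ)) (b := 1) (x₀ := z₀)
    (bound := fun _ => (1 + 2 * R ^ 2) * Real.exp (R ^ 2)) (s := ball z₀ 1) (ball_mem_nhds z₀ one_pos)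
    ?_ ?_ ?_ ?_ ?_ ?_
  · have h2 : (∫ s in (0:ℝ)..1, (1 - 2 * (s : ℂ) ^ 2 * z₀ ^ 2) * Complex.exp (-((s : ℂ) * z₀) ^ 2))
        = Complex.exp (-z₀ ^ 2) := by
      have hftc : ∀ s ∈ Set.uIcc (0:ℝ) 1,
          HasDerivAt (fun s : ℝ => (s : ℂ) * Complex.exp (-((s : ℂ) * z₀) ^ 2))
            ((1 - 2 * (s : ℂ) ^ 2 * z₀ ^ 2) * Complex.exp (-((s : ℂ) * z₀) ^ 2)) s := by
        intro s _
        have h := (F_hasDerivAt z₀ (s : ℂ)).comp_ofReal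
        convert h using 1
        · funext y; ring_nf
        · ring_nf
      have hint : IntervalIntegrable
          (fun s : ℝ => (1 - 2 * (s : ℂ) ^ 2 * z₀ ^ 2) * Complex.exp (-((s : ℂ) * z₀) ^ 2))
          volume 0 1 := by
        apply Continuous.intervalIntegrable; fun_prop
      rw [intervalIntegral.integral_eq_sub_of_hasDerivAt hftc hint]
      simp
    rw [h2] at key
    exact key.2
  · filter_upwards with z
    apply Continuous.aestronglyMeasurable; fun_prop
  · apply Continuous.intervalIntegrable; fun_prop
  · apply Continuous.aestronglyMeasurable; fun_prop
  · filter_upwards with s hs z hz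
    have hs' : s ∈ Set.Ioc (0:ℝ) 1 := by
      simpa [Set.uIoc_of_le (zero_le_one)] using hs
    have hzR : ‖z‖ ≤ R := by
      have h := mem_ball_iff_norm.mp hz
      calc ‖z‖ = ‖z₀ + (z - z₀)‖ := by ring_nf
        _ ≤ ‖z₀‖ + ‖z - z₀‖ := norm_add_le _ _
        _ ≤ ‖z₀‖ + 1 := by linarith
    have hsn : ‖(s:ℂ)‖ ≤ 1 := by
      simp only [Complex.norm_real, Real.norm_eq_abs]
      rw [abs_of_pos hs'.1]; exact hs'.2
    have hsz : ‖(s:ℂ) * z‖ ≤ R := by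
      rw [norm_mul]
      nlinarith [norm_nonneg (s:ℂ), norm_nonneg z]
    rw [norm_mul]
    have hexp : ‖Complex.exp (-((s : ℂ) * z) ^ 2)‖ ≤ Real.exp (R ^ 2) := by
      rw [Complex.norm_exp]
      apply Real.exp_le_exp.mpr
      have h3 := Complex.re_le_norm (-((s : ℂ) * z) ^ 2)
      have h4 : ‖-((s : ℂ) * z) ^ 2‖ = ‖(s:ℂ) * z‖ ^ 2 := by
        rw [norm_neg, norm_pow]
      have h5 : ‖(s:ℂ) * z‖ ≤ R := hsz
      nlinarith [norm_nonneg ((s:ℂ) * z)]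
    have h1 : ‖1 - 2 * (s : ℂ) ^ 2 * z ^ 2‖ ≤ 1 + 2 * R ^ 2 := by
      have := norm_sub_le (1 : ℂ) (2 * (s : ℂ) ^ 2 * z ^ 2)
      have h6 : ‖(2 : ℂ) * (s : ℂ) ^ 2 * z ^ 2‖ ≤ 2 * R ^ 2 := by
        simp only [norm_mul, norm_pow, Complex.norm_ofNat]
        have hs2 : ‖(s:ℂ)‖ ^ 2 ≤ 1 := by nlinarith [norm_nonneg (s:ℂ)]
        have hz2 : ‖z‖ ^ 2 ≤ R ^ 2 := by nlinarith [norm_nonneg z]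
        nlinarith [sq_nonneg ‖z‖, sq_nonneg ‖(s:ℂ)‖]
      simp only [norm_one] at this
      linarith
    exact mul_le_mul h1 hexp (norm_nonneg _) (by positivity)
  · exact intervalIntegrable_const
  · filter_upwards with s _ z _
    exact F_hasDerivAt (s : ℂ) z

noncomputable def LamD (z : ℂ) : ℂ := 2 * z * Lam z - 2 / (Real.sqrt Real.pi : ℂ)

lemma hasDerivAt_Lam (z : ℂ) : HasDerivAt Lam (LamD z) z := by
  have hL : Lam = fun z => Complex.exp (z ^ 2) *
      (1 - (2 / (Real.sqrt Real.pi : ℂ)) * erfInt z) := rfl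
  rw [hL]
  have h1 : HasDerivAt (fun z : ℂ => Complex.exp (z ^ 2))
      (Complex.exp (z ^ 2) * (2 * z)) z := by
    have := ((hasDerivAt_pow 2 z)).cexp
    simpa [mul_comm] using this
  have h2 : HasDerivAt (fun z : ℂ => 1 - (2 / (Real.sqrt Real.pi : ℂ)) * erfInt z)
      (-((2 / (Real.sqrt Real.pi : ℂ)) * Complex.exp (-z ^ 2))) z :=
    (((hasDerivAt_erfInt z).const_mul _).const_sub 1)
  have h3 := h1.mul h2
  refine h3.congr_deriv (Eq.symm ?_)
  unfold LamD
  rw [hL]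
  have hee : Complex.exp (z ^ 2) * Complex.exp (-z ^ 2) = 1 := by
    rw [← Complex.exp_add]; simp
  linear_combination (2 / (Real.sqrt Real.pi : ℂ)) * hee
  

lemma hasDerivAt_LamD (z : ℂ) :
    HasDerivAt LamD (2 * Lam z + 2 * z * LamD z) z := by
  have h1 : HasDerivAt (fun z : ℂ => 2 * z) 2 z := by
    simpa using (hasDerivAt_id z).const_mul (2:ℂ)
  have h2 := (h1.mul (hasDerivAt_Lam z)).sub_const (2 / (Real.sqrt Real.pi : ℂ))
  exact h2

lemma hasDerivAt_sqrtit {t : ℝ} (ht : 0 < t) :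
    HasDerivAt sqrtit (sqrtit t / (2 * t)) t := by
  have hs := (Real.hasDerivAt_sqrt ht.ne').ofReal_comp
  have h2 := hs.mul_const ((1 + Complex.I) / (Real.sqrt 2 : ℂ))
  have hfun : (fun y : ℝ => ((Real.sqrt y : ℝ) : ℂ) * ((1 + Complex.I) / (Real.sqrt 2 : ℂ)))
      = sqrtit := by
    funext y; unfold sqrtit; ring
  rw [hfun] at h2
  refine h2.congr_deriv (Eq.symm ?_)
  unfold sqrtit
  have hst : ((Real.sqrt t : ℝ) : ℂ) ^ 2 = (t : ℂ) := by
    rw [← Complex.ofReal_pow, Real.sq_sqrt ht.le]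
  have hs0 : ((Real.sqrt t : ℝ) : ℂ) ≠ 0 := by
    simpa using (Real.sqrt_ne_zero'.mpr ht)
  have h20 : ((Real.sqrt 2 : ℝ) : ℂ) ≠ 0 := by
    simpa using (Real.sqrt_ne_zero'.mpr two_pos)
  have ht0 : (t : ℂ) ≠ 0 := by exact_mod_cast ht.ne'
  push_cast
  field_simp
  linear_combination (1 + Complex.I) * hst

lemma sqrtit_sq {t : ℝ} (ht : 0 ≤ t) : (sqrtit t) ^ 2 = Complex.I * t := by
  unfold sqrtit
  have hst : ((Real.sqrt t : ℝ) : ℂ) ^ 2 = (t : ℂ) := by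
    rw [← Complex.ofReal_pow, Real.sq_sqrt ht]
  have h2 : ((Real.sqrt 2 : ℝ) : ℂ) ^ 2 = 2 := by
    rw [← Complex.ofReal_pow, Real.sq_sqrt (by norm_num : (0:ℝ) ≤ 2)]; norm_num
  have hI : (1 + Complex.I) ^ 2 = 2 * Complex.I := by
    have := Complex.I_sq
    ring_nf
    linear_combination this
  rw [div_pow, mul_pow, hst, h2, hI]
  ring

lemma sqrtit_ne_zero {t : ℝ} (ht : 0 < t) : sqrtit t ≠ 0 := by
  intro h
  have h2 := sqrtit_sq ht.le
  rw [h] at h2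
  norm_num at h2
  exact ht.ne' h2


set_option maxHeartbeats 1000000 in
/-- For every `ω ∈ ℂ`, the function `φ(t,x)` satisfies the free Schrödinger equation
`i·∂φ/∂t = −∂²φ/∂x²` for all `t > 0` and `x ≠ 0`. -/
theorem phiOmega_solves_free_schroedinger (ω : ℂ) :
    ∀ t : ℝ, 0 < t → ∀ x : ℝ, x ≠ 0 →
      Complex.I * deriv (fun τ : ℝ => phiOmega ω τ x) t =
        - iteratedDeriv 2 (fun y : ℝ => phiOmega ω t y) x := by
  intro t ht x hx
  have ht0 : (t : ℂ) ≠ 0 := by exact_mod_cast ht.ne'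
  have hI0 : Complex.I ≠ 0 := Complex.I_ne_zero
  set a : ℂ := sqrtit t with ha
  have ha2 : a ^ 2 = Complex.I * t := sqrtit_sq ht.le
  have ha0 : a ≠ 0 := sqrtit_ne_zero ht
  set ε : ℝ := if 0 < x then 1 else -1 with hεdef
  have hε : ε = 1 ∨ ε = -1 := by
    rw [hεdef]; split_ifs <;> simp
  have hεx : 0 < ε * x := by
    rw [hεdef]; split_ifs with h
    · simpa using h
    · have hlt : x < 0 := lt_of_le_of_ne (not_lt.mp h) hx
      nlinarith
  have habs : ∀ y : ℝ, 0 < ε * y → |y| = ε * y := by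
    intro y hy
    rcases hε with h | h <;> rw [h] at hy ⊢
    · rw [one_mul] at hy ⊢; exact abs_of_pos hy
    · have : y < 0 := by nlinarith
      rw [abs_of_neg this]; ring
  have hc : ((|x| : ℝ) : ℂ) = (ε : ℝ) * (x : ℂ) := by
    rw [habs x hεx]; push_cast; ring
  set z : ℂ := (ε : ℝ) * (x : ℂ) / (2 * a) + ω * a with hz
  -- time derivative
  have h1 : HasDerivAt (fun τ : ℝ => Complex.exp (-(x:ℂ) ^ 2 / (4 * Complex.I * (τ:ℂ))))
      (Complex.exp (-(x:ℂ) ^ 2 / (4 * Complex.I * (t:ℂ))) *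
        ((x:ℂ) ^ 2 / (4 * Complex.I * (t:ℂ) ^ 2))) t := by
    have hg : HasDerivAt (fun w : ℂ => -(x:ℂ) ^ 2 / (4 * Complex.I * w))
        ((x:ℂ) ^ 2 / (4 * Complex.I * (t:ℂ) ^ 2)) (t : ℂ) := by
      have h := (hasDerivAt_inv ht0).const_mul (-(x:ℂ) ^ 2 / (4 * Complex.I))
      have hfun : (fun w : ℂ => -(x:ℂ) ^ 2 / (4 * Complex.I) * w⁻¹)
          = fun w : ℂ => -(x:ℂ) ^ 2 / (4 * Complex.I * w) := by
        funext w
        rw [div_eq_mul_inv, div_eq_mul_inv, mul_inv]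
        ring
      rw [hfun] at h
      refine h.congr_deriv (Eq.symm ?_)
      field_simp
    exact hg.cexp.comp_ofReal
  have hA' : HasDerivAt sqrtit (a / (2 * t)) t := hasDerivAt_sqrtit ht
  have hinner : HasDerivAt
      (fun τ : ℝ => ((|x| : ℝ) : ℂ) / (2 * sqrtit τ) + ω * sqrtit τ)
      ((-((ε : ℝ) * (x:ℂ)) / (2 * a ^ 2) + ω) * (a / (2 * (t:ℂ)))) t := by
    have hinv : HasDerivAt (fun τ : ℝ => (sqrtit τ)⁻¹)
        ((a / (2 * (t:ℂ))) * (-(a ^ 2)⁻¹)) t := by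
      have h6 := HasDerivAt.scomp t (hasDerivAt_inv ha0) hA'
      simpa [Function.comp_def, smul_eq_mul] using h6
    have h2 := (hinv.const_mul (((|x| : ℝ) : ℂ) / 2)).add (hA'.const_mul ω)
    have hfun : (fun τ : ℝ => ((|x| : ℝ) : ℂ) / 2 * (sqrtit τ)⁻¹ + ω * sqrtit τ)
        = fun τ : ℝ => ((|x| : ℝ) : ℂ) / (2 * sqrtit τ) + ω * sqrtit τ := by
      funext τ
      rw [div_eq_mul_inv, div_eq_mul_inv, mul_inv]
      ring
    rw [← hfun]
    refine h2.congr_deriv (Eq.symm ?_)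
    rw [hc]
    ring
  have hzpt : ((|x| : ℝ) : ℂ) / (2 * a) + ω * a = z := by rw [hc]
  have h2 : HasDerivAt
      (fun τ : ℝ => Lam (((|x| : ℝ) : ℂ) / (2 * sqrtit τ) + ω * sqrtit τ))
      (((-((ε : ℝ) * (x:ℂ)) / (2 * a ^ 2) + ω) * (a / (2 * (t:ℂ)))) * LamD z) t := by
    have hLz : HasDerivAt Lam (LamD z)
        (((|x| : ℝ) : ℂ) / (2 * sqrtit t) + ω * sqrtit t) := by
      rw [show ((|x| : ℝ) : ℂ) / (2 * sqrtit t) + ω * sqrtit t = z from hzpt]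
      exact hasDerivAt_Lam z
    have h3 := HasDerivAt.scomp t hLz hinner
    simpa [Function.comp_def, smul_eq_mul] using h3
  have hT := h1.mul h2
  have hphi_t : (fun τ : ℝ => phiOmega ω τ x)
      = fun τ : ℝ => Complex.exp (-(x:ℂ) ^ 2 / (4 * Complex.I * (τ:ℂ))) *
          Lam (((|x| : ℝ) : ℂ) / (2 * sqrtit τ) + ω * sqrtit τ) := rfl
  -- spatial derivatives
  have hwd : ∀ y : ℝ, HasDerivAt
      (fun y : ℝ => (ε : ℝ) * (y:ℂ) / (2 * a) + ω * a) ((ε : ℝ) / (2 * a)) y := by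
    intro y
    have hg : HasDerivAt (fun w : ℂ => (ε : ℝ) * w / (2 * a) + ω * a)
        ((ε : ℝ) / (2 * a)) (y : ℂ) := by
      have h := (((hasDerivAt_id (y:ℂ)).const_mul ((ε : ℝ) : ℂ)).div_const (2 * a)).add_const
        (ω * a)
      simpa using h
    exact hg.comp_ofReal
  have hvd : ∀ y : ℝ, HasDerivAt
      (fun y : ℝ => Complex.exp (-(y:ℂ) ^ 2 / (4 * Complex.I * (t:ℂ))))
      (Complex.exp (-(y:ℂ) ^ 2 / (4 * Complex.I * (t:ℂ))) *
        (-(y:ℂ) / (2 * Complex.I * (t:ℂ)))) y := by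
    intro y
    have hg : HasDerivAt (fun w : ℂ => -w ^ 2 / (4 * Complex.I * (t:ℂ)))
        (-(y:ℂ) / (2 * Complex.I * (t:ℂ))) (y : ℂ) := by
      have h := ((hasDerivAt_pow 2 (y:ℂ)).neg).div_const (4 * Complex.I * (t:ℂ))
      refine h.congr_deriv (Eq.symm ?_)
      field_simp
      ring
    exact hg.cexp.comp_ofReal
  have hLWd : ∀ y : ℝ, HasDerivAt
      (fun y : ℝ => Lam ((ε : ℝ) * (y:ℂ) / (2 * a) + ω * a))
      (((ε : ℝ) / (2 * a)) * LamD ((ε : ℝ) * (y:ℂ) / (2 * a) + ω * a)) y := by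
    intro y
    have h3 := HasDerivAt.scomp y (hasDerivAt_Lam ((ε : ℝ) * (y:ℂ) / (2 * a) + ω * a)) (hwd y)
    simpa [Function.comp_def, smul_eq_mul] using h3
  have hfd : ∀ y : ℝ, HasDerivAt
      (fun y : ℝ => Complex.exp (-(y:ℂ) ^ 2 / (4 * Complex.I * (t:ℂ))) *
        Lam ((ε : ℝ) * (y:ℂ) / (2 * a) + ω * a))
      (Complex.exp (-(y:ℂ) ^ 2 / (4 * Complex.I * (t:ℂ))) *
        ((-(y:ℂ) / (2 * Complex.I * (t:ℂ))) * Lam ((ε : ℝ) * (y:ℂ) / (2 * a) + ω * a)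
          + ((ε : ℝ) / (2 * a)) * LamD ((ε : ℝ) * (y:ℂ) / (2 * a) + ω * a))) y := by
    intro y
    have h4 := (hvd y).mul (hLWd y)
    refine h4.congr_deriv (Eq.symm ?_)
    ring
  -- the set of points with the same sign as x
  have hS : IsOpen {y : ℝ | 0 < ε * y} :=
    isOpen_lt continuous_const (continuous_const.mul continuous_id)
  have hxS : x ∈ {y : ℝ | 0 < ε * y} := hεx
  have hmem : ∀ y ∈ {y : ℝ | 0 < ε * y}, phiOmega ω t y
      = Complex.exp (-(y:ℂ) ^ 2 / (4 * Complex.I * (t:ℂ))) *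
          Lam ((ε : ℝ) * (y:ℂ) / (2 * a) + ω * a) := by
    intro y hy
    unfold phiOmega
    have hcy : ((|y| : ℝ) : ℂ) = (ε : ℝ) * (y : ℂ) := by
      rw [habs y hy]; push_cast; ring
    rw [hcy]
  have hevd : ∀ y ∈ {y : ℝ | 0 < ε * y},
      deriv (fun y : ℝ => phiOmega ω t y) y
        = Complex.exp (-(y:ℂ) ^ 2 / (4 * Complex.I * (t:ℂ))) *
            ((-(y:ℂ) / (2 * Complex.I * (t:ℂ))) * Lam ((ε : ℝ) * (y:ℂ) / (2 * a) + ω * a)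
              + ((ε : ℝ) / (2 * a)) * LamD ((ε : ℝ) * (y:ℂ) / (2 * a) + ω * a)) := by
    intro y hy
    have heq : (fun y : ℝ => phiOmega ω t y) =ᶠ[nhds y]
        (fun y : ℝ => Complex.exp (-(y:ℂ) ^ 2 / (4 * Complex.I * (t:ℂ))) *
          Lam ((ε : ℝ) * (y:ℂ) / (2 * a) + ω * a)) := by
      filter_upwards [hS.mem_nhds hy] with u hu using hmem u hu
    rw [heq.deriv_eq, (hfd y).deriv]
  -- derivative of the explicit first-derivative function D
  have hy1 : HasDerivAt (fun y : ℝ => -(y:ℂ) / (2 * Complex.I * (t:ℂ)))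
      (-1 / (2 * Complex.I * (t:ℂ))) x := by
    have hg : HasDerivAt (fun w : ℂ => -w / (2 * Complex.I * (t:ℂ)))
        (-1 / (2 * Complex.I * (t:ℂ))) (x : ℂ) :=
      ((hasDerivAt_id (x:ℂ)).neg).div_const (2 * Complex.I * (t:ℂ))
    exact hg.comp_ofReal
  have hLDd : HasDerivAt
      (fun y : ℝ => LamD ((ε : ℝ) * (y:ℂ) / (2 * a) + ω * a))
      (((ε : ℝ) / (2 * a)) * (2 * Lam z + 2 * z * LamD z)) x := by
    have h3 := HasDerivAt.scomp x (hasDerivAt_LamD ((ε : ℝ) * ((x:ℝ):ℂ) / (2 * a) + ω * a)) (hwd x)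
    rw [← hz] at h3
    simpa [Function.comp_def, smul_eq_mul] using h3
  have hLWx : HasDerivAt (fun y : ℝ => Lam ((ε : ℝ) * (y:ℂ) / (2 * a) + ω * a))
      (((ε : ℝ) / (2 * a)) * LamD z) x := by
    have := hLWd x
    rwa [← hz] at this
  have hH : HasDerivAt
      (fun y : ℝ => (-(y:ℂ) / (2 * Complex.I * (t:ℂ))) *
          Lam ((ε : ℝ) * (y:ℂ) / (2 * a) + ω * a)
        + ((ε : ℝ) / (2 * a)) * LamD ((ε : ℝ) * (y:ℂ) / (2 * a) + ω * a))
      ((-1 / (2 * Complex.I * (t:ℂ))) * Lam z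
        + (-(x:ℂ) / (2 * Complex.I * (t:ℂ))) * (((ε : ℝ) / (2 * a)) * LamD z)
        + ((ε : ℝ) / (2 * a)) * (((ε : ℝ) / (2 * a)) * (2 * Lam z + 2 * z * LamD z))) x := by
    have h5 := (hy1.mul hLWx).add (hLDd.const_mul ((ε : ℝ) / (2 * a) : ℂ))
    exact h5
  have hDd := (hvd x).mul hH
  -- assemble second derivative
  have hsecond : deriv (deriv (fun y : ℝ => phiOmega ω t y)) x
      = Complex.exp (-(x:ℂ) ^ 2 / (4 * Complex.I * (t:ℂ))) *
          (-(x:ℂ) / (2 * Complex.I * (t:ℂ))) *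
          ((-(x:ℂ) / (2 * Complex.I * (t:ℂ))) * Lam z + ((ε : ℝ) / (2 * a)) * LamD z)
        + Complex.exp (-(x:ℂ) ^ 2 / (4 * Complex.I * (t:ℂ))) *
          ((-1 / (2 * Complex.I * (t:ℂ))) * Lam z
            + (-(x:ℂ) / (2 * Complex.I * (t:ℂ))) * (((ε : ℝ) / (2 * a)) * LamD z)
            + ((ε : ℝ) / (2 * a)) * (((ε : ℝ) / (2 * a)) * (2 * Lam z + 2 * z * LamD z))) := by
    have heq2 : deriv (fun y : ℝ => phiOmega ω t y) =ᶠ[nhds x]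
        (fun y : ℝ => Complex.exp (-(y:ℂ) ^ 2 / (4 * Complex.I * (t:ℂ))) *
          ((-(y:ℂ) / (2 * Complex.I * (t:ℂ))) * Lam ((ε : ℝ) * (y:ℂ) / (2 * a) + ω * a)
            + ((ε : ℝ) / (2 * a)) * LamD ((ε : ℝ) * (y:ℂ) / (2 * a) + ω * a))) := by
      filter_upwards [hS.mem_nhds hxS] with u hu using hevd u hu
    rw [heq2.deriv_eq]
    have := hDd.deriv
    exact this
  rw [show (2:ℕ) = 1 + 1 from rfl, iteratedDeriv_succ, iteratedDeriv_one, hsecond]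
  rw [hphi_t]
  erw [hT.deriv]
  rw [hzpt]
  -- final algebra
  have htI : (t : ℂ) = -Complex.I * a ^ 2 := by
    rw [ha2]; simp [← mul_assoc, Complex.I_mul_I]
  have hI2 : Complex.I ^ 2 = -1 := Complex.I_sq
  set L : ℂ := Lam z with hL
  set L' : ℂ := LamD z with hL'
  set E : ℂ := Complex.exp (-(x:ℂ) ^ 2 / (4 * Complex.I * (t:ℂ))) with hE
  rw [htI, hz]
  have hiI : Complex.I * Complex.I⁻¹ = 1 := mul_inv_cancel₀ hI0
  have hab : a * a⁻¹ = 1 := mul_inv_cancel₀ ha0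
  have hε2c : ((ε:ℝ):ℂ) ^ 2 = 1 := by rcases hε with h | h <;> rw [h] <;> norm_num
  linear_combination (((-1:ℂ)/2) * E * L * a⁻¹^2 * Complex.I * Complex.I⁻¹ + ((-1:ℂ)/2) * E * L * a⁻¹^2 + ((-1:ℂ)/4) * E * L * a⁻¹^4 * Complex.I * Complex.I⁻¹^3 * (x:ℂ)^2 + ((-1:ℂ)/2) * E * L' * a⁻¹^3 * ((ε:ℝ):ℂ) * Complex.I * Complex.I⁻¹ * (x:ℂ) + ((-1:ℂ)/2) * E * L' * a⁻¹^3 * ((ε:ℝ):ℂ) * (x:ℂ) + ((-1:ℂ)/2) * E * L' * a * a⁻¹^2 * ω + ((1:ℂ)/4) * E * L' * a * a⁻¹^4 * ((ε:ℝ):ℂ) * (x:ℂ)) * hiI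
    + (((1:ℂ)/4) * E * L' * a⁻¹^3 * ((ε:ℝ):ℂ) * (x:ℂ)) * hab
    + (((1:ℂ)/2) * E * L * a⁻¹^2 * Complex.I⁻¹^2 + ((1:ℂ)/4) * E * L * a⁻¹^4 * Complex.I⁻¹^4 * (x:ℂ)^2 + ((1:ℂ)/2) * E * L' * a⁻¹^3 * ((ε:ℝ):ℂ) * Complex.I⁻¹^2 * (x:ℂ)) * hI2
    + (((1:ℂ)/2) * E * L * a⁻¹^2 + ((1:ℂ)/2) * E * L' * a * a⁻¹^2 * ω + ((1:ℂ)/4) * E * L' * a⁻¹^3 * ((ε:ℝ):ℂ) * (x:ℂ)) * hε2c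
end

section
/- Let F : ℂ → ℂ be entire with Taylor coefficients fₙ = F⁽ⁿ⁾(0)/n!. Then for every a ∈ ℂ \ {0} and every z ∈ ℂ, the difference quotient admits the absolutely convergent double series representation (F(z + a) − F(z))/a = Σ_{m=0}^∞ Σ_{n=0}^∞ f_{n+m+1}·binom(n+m+1, m+1)·zⁿ·aᵐ, where binom denotes the binomial coefficient. -/
open Finset Filter

/-- Taylor expansion of an entire function. -/
lemma aux_hasSum_taylor (F : ℂ → ℂ) (hF : Differentiable ℂ F) (f : ℕ → ℂ)
    (hf : ∀ n : ℕ, f n = iteratedDeriv n F 0 / (Nat.factorial n : ℂ)) (w : ℂ) :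
    HasSum (fun n : ℕ => f n * w ^ n) (F w) := by
  have h := Complex.hasSum_taylorSeries_of_entire hF 0 w
  have he : (fun n : ℕ => f n * w ^ n)
      = fun n : ℕ => (Nat.factorial n : ℂ)⁻¹ • (w - 0) ^ n • iteratedDeriv n F 0 := by
    funext n
    rw [hf]
    have : (Nat.factorial n : ℂ) ≠ 0 := Nat.cast_ne_zero.mpr (Nat.factorial_ne_zero n)
    rw [smul_eq_mul, smul_eq_mul, sub_zero, div_eq_mul_inv]
    ring
  rw [he]
  exact h

/-- Absolute summability of the Taylor coefficients against any radius. -/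
lemma aux_summable_abs (F : ℂ → ℂ) (hF : Differentiable ℂ F) (f : ℕ → ℂ)
    (hf : ∀ n : ℕ, f n = iteratedDeriv n F 0 / (Nat.factorial n : ℂ)) (r : ℝ) (hr : 0 ≤ r) :
    Summable (fun n : ℕ => ‖f n‖ * r ^ n) := by
  set R : ℝ := r + 1 with hRdef
  have hR : 0 < R := by positivity
  have hrR : r / R < 1 := by
    rw [div_lt_one hR]; simp [hRdef]
  have hs := (aux_hasSum_taylor F hF f hf (R : ℂ)).summable
  have h0 : Tendsto (fun n : ℕ => ‖f n‖ * R ^ n) atTop (nhds 0) := by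
    have := (hs.tendsto_atTop_zero).norm
    rw [norm_zero] at this
    convert this using 2 with n
    simp [map_mul, map_pow, Complex.norm_real, Real.norm_eq_abs, abs_of_pos hR]
  obtain ⟨C, hC⟩ := h0.bddAbove_range
  have key : ∀ n : ℕ, ‖f n‖ * R ^ n ≤ C := fun n =>
    hC (Set.mem_range_self n)
  refine Summable.of_nonneg_of_le (fun n => by positivity) (fun n => ?_)
    ((summable_geometric_of_lt_one (by positivity) hrR).mul_left C)
  have hRn : (0 : ℝ) < R ^ n := by positivity
  calc ‖f n‖ * r ^ n
      = (‖f n‖ * R ^ n) * (r / R) ^ n := by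
        rw [div_pow]; field_simp
    _ ≤ C * (r / R) ^ n := by
        apply mul_le_mul_of_nonneg_right (key n); positivity

set_option maxHeartbeats 1000000 in
/-- For an entire `F` with Taylor coefficients `fₙ = F⁽ⁿ⁾(0)/n!`, the difference quotient
admits the absolutely convergent double series
`(F(z+a) − F(z))/a = Σₘ Σₙ f_{n+m+1}·C(n+m+1, m+1)·zⁿ·aᵐ`. -/
theorem difference_quotient_double_series
    (F : ℂ → ℂ) (hF : Differentiable ℂ F) (f : ℕ → ℂ)
    (hf : ∀ n : ℕ, f n = iteratedDeriv n F 0 / (Nat.factorial n : ℂ)) :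
    ∀ a : ℂ, a ≠ 0 → ∀ z : ℂ,
      Summable (fun p : ℕ × ℕ =>
        ‖f (p.2 + p.1 + 1) * (Nat.choose (p.2 + p.1 + 1) (p.1 + 1) : ℂ) *
          z ^ p.2 * a ^ p.1‖) ∧
      (F (z + a) - F z) / a =
        ∑' m : ℕ, ∑' n : ℕ,
          f (n + m + 1) * (Nat.choose (n + m + 1) (m + 1) : ℂ) * z ^ n * a ^ m := by
  intro a ha z
  set T : ℕ × ℕ → ℂ := fun p =>
    f (p.2 + p.1 + 1) * (Nat.choose (p.2 + p.1 + 1) (p.1 + 1) : ℂ) * z ^ p.2 * a ^ p.1 with hT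
  set x : ℝ := ‖z‖ with hx
  set y : ℝ := ‖a‖ with hy
  have hy0 : 0 < y := by
    rw [hy]; exact (norm_pos_iff.mpr ha)
  set r : ℝ := x + y with hr
  have hr0 : 0 ≤ r := by positivity
  -- the bound on the antidiagonal sums
  have keyIneq : ∀ k : ℕ,
      ∑ p ∈ Finset.HasAntidiagonal.antidiagonal k, ‖T p‖ ≤ ‖f (k + 1)‖ * r ^ (k + 1) / y := by
    intro k
    rw [Finset.Nat.sum_antidiagonal_eq_sum_range_succ_mk]
    simp only [Nat.succ_eq_add_one]
    rw [le_div_iff₀ hy0]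
    have hterm : ∀ m ∈ Finset.range (k + 1),
        ‖T (m, k - m)‖ * y
          = ‖f (k + 1)‖ * ((Nat.choose (k + 1) (m + 1) : ℝ) * x ^ (k - m) * y ^ (m + 1)) := by
      intro m hm
      have hmk : m ≤ k := Finset.mem_range_succ_iff.mp hm
      have hsub : k - m + m + 1 = k + 1 := by omega
      simp only [hT, norm_mul, norm_pow, Complex.norm_natCast, hsub, ← hx, ← hy]
      ring
    rw [Finset.sum_mul, Finset.sum_congr rfl hterm, ← Finset.mul_sum]
    have hbin : r ^ (k + 1)
        = ∑ j ∈ Finset.range (k + 2), y ^ j * x ^ (k + 1 - j) * (Nat.choose (k + 1) j : ℝ) := by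
      rw [hr, add_comm x y, add_pow]
    rw [hbin]
    apply mul_le_mul_of_nonneg_left _ (norm_nonneg _)
    rw [Finset.sum_range_succ' (fun j => y ^ j * x ^ (k + 1 - j) * (Nat.choose (k + 1) j : ℝ)) (k + 1)]
    have : ∑ m ∈ Finset.range (k + 1), (Nat.choose (k + 1) (m + 1) : ℝ) * x ^ (k - m) * y ^ (m + 1)
        = ∑ m ∈ Finset.range (k + 1), y ^ (m + 1) * x ^ (k + 1 - (m + 1)) * (Nat.choose (k + 1) (m + 1) : ℝ) := by
      apply Finset.sum_congr rfl
      intro m hm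
      have : k + 1 - (m + 1) = k - m := by omega
      rw [this]; ring
    rw [this]
    have h0 : (0 : ℝ) ≤ y ^ 0 * x ^ (k + 1 - 0) * (Nat.choose (k + 1) 0 : ℝ) := by positivity
    linarith
  -- summability of the bounding series
  have hbound : Summable (fun k : ℕ => ‖f (k + 1)‖ * r ^ (k + 1) / y) := by
    have h1 := aux_summable_abs F hF f hf r hr0
    have h2 : Summable (fun k : ℕ => ‖f (k + 1)‖ * r ^ (k + 1)) :=
      (summable_nat_add_iff 1).mpr h1
    simpa [div_eq_mul_inv] using h2.mul_right y⁻¹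
  -- absolute summability of the double series
  have habs : Summable (fun p : ℕ × ℕ => ‖T p‖) := by
    rw [← Finset.HasAntidiagonal.sigmaAntidiagonalEquivProd.summable_iff]
    apply (summable_sigma_of_nonneg (fun _ => norm_nonneg _)).mpr
    constructor
    · intro k; exact Summable.of_finite
    · apply Summable.of_nonneg_of_le _ _ hbound
      · intro k
        apply tsum_nonneg
        intro p; exact norm_nonneg _
      · intro k
        have : ∑' (p : (Finset.HasAntidiagonal.antidiagonal k : Finset (ℕ × ℕ))),
            ‖T (Finset.HasAntidiagonal.sigmaAntidiagonalEquivProd ⟨k, p⟩)‖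
            = ∑ p ∈ Finset.HasAntidiagonal.antidiagonal k, ‖T p‖ := by
          rw [← Finset.tsum_subtype]
          rfl
        rw [this]
        exact keyIneq k
  refine ⟨habs, ?_⟩
  have hTsummable : Summable T := by
    apply Summable.of_norm
    simpa using habs
  -- fiber sums equal the single series terms
  have hfiber : ∀ k : ℕ, ∑ p ∈ Finset.HasAntidiagonal.antidiagonal k, T p
      = f (k + 1) * ((z + a) ^ (k + 1) - z ^ (k + 1)) / a := by
    intro k
    rw [eq_div_iff ha, Finset.Nat.sum_antidiagonal_eq_sum_range_succ_mk, Finset.sum_mul]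
    have hbin : (z + a) ^ (k + 1)
        = ∑ j ∈ Finset.range (k + 2), a ^ j * z ^ (k + 1 - j) * (Nat.choose (k + 1) j : ℂ) := by
      rw [add_comm z a, add_pow]
    rw [hbin, Finset.sum_range_succ' (fun j => a ^ j * z ^ (k + 1 - j) * (Nat.choose (k + 1) j : ℂ)) (k + 1)]
    simp only [pow_zero, Nat.sub_zero, Nat.choose_zero_right, Nat.cast_one, one_mul, mul_one]
    rw [add_sub_cancel_right, Finset.mul_sum]
    apply Finset.sum_congr rfl
    intro m hm
    have hmk : m ≤ k := Finset.mem_range_succ_iff.mp hm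
    have hsub : k - m + m + 1 = k + 1 := by omega
    have hsub2 : k + 1 - (m + 1) = k - m := by omega
    simp only [hT, hsub, hsub2]
    ring
  -- the single series sums to the difference quotient
  have h1 : HasSum (fun k : ℕ => f (k + 1) * ((z + a) ^ (k + 1) - z ^ (k + 1)) / a)
      ((F (z + a) - F z) / a) := by
    have hs1 := aux_hasSum_taylor F hF f hf (z + a)
    have hs2 := aux_hasSum_taylor F hF f hf z
    have hsub := hs1.sub hs2
    have h3 := (hasSum_nat_add_iff' (f := fun n : ℕ => f n * (z + a) ^ n - f n * z ^ n) 1).mpr hsub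
    simp only [Finset.range_one, Finset.sum_singleton, pow_zero, mul_one, sub_self, sub_zero] at h3
    have h4 := h3.div_const a
    have e : (fun k : ℕ => f (k + 1) * ((z + a) ^ (k + 1) - z ^ (k + 1)) / a)
        = fun i => (f (i + 1) * (z + a) ^ (i + 1) - f (i + 1) * z ^ (i + 1)) / a := by
      funext k
      ring
    rw [e]; exact h4
  -- the double series sums to the same thing via the antidiagonal decomposition
  have hsig : HasSum (fun x : (Σ k : ℕ, (Finset.HasAntidiagonal.antidiagonal k : Finset (ℕ × ℕ))) => T x.2)
      (∑' p : ℕ × ℕ, T p) := by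
    exact Finset.HasAntidiagonal.sigmaAntidiagonalEquivProd.hasSum_iff.mpr hTsummable.hasSum
  have h2 : HasSum (fun k : ℕ => f (k + 1) * ((z + a) ^ (k + 1) - z ^ (k + 1)) / a)
      (∑' p : ℕ × ℕ, T p) := by
    apply HasSum.sigma hsig
    intro k
    rw [← hfiber k]
    exact Finset.hasSum (Finset.HasAntidiagonal.antidiagonal k) T
  have hval : (F (z + a) - F z) / a = ∑' p : ℕ × ℕ, T p := h1.unique h2
  rw [hval, Summable.tsum_prod hTsummable]
end

section
/- Fix t > 0 and x ∈ ℝ, and define for each j ≥ 0 the coefficient c_j(t,x) := Σ_{m=⌈j/2⌉}^{j} ((i·x)^{2m−j}·(−i·t)^{j−m}/m!)·binom(m, j−m). Then exp(i·k·x − i·k²·t) = Σ_{j=0}^∞ c_j(t,x)·kʲ for every k ∈ ℂ, and for every B ≥ 0 the weighted coefficient sum satisfies Σ_{j=0}^∞ |c_j(t,x)|·Bʲ ≤ exp(B·|x| + B²·t). -/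
/-- The coefficient `c_j(t,x) = Σ_{m=⌈j/2⌉}^{j} ((i·x)^{2m−j}·(−i·t)^{j−m}/m!)·C(m, j−m)`. -/
noncomputable def freeCoeff (t x : ℝ) (j : ℕ) : ℂ :=
  ∑ m ∈ Finset.Icc ((j + 1) / 2) j,
    (Complex.I * x) ^ (2 * m - j) * (-Complex.I * t) ^ (j - m) / (Nat.factorial m : ℂ) *
      (Nat.choose m (j - m) : ℂ)

/-- Auxiliary double-indexed term for the expansion of `exp(ikx - ik²t)`. -/
noncomputable def freeAux (t x : ℝ) (k : ℂ) (p : ℕ × ℕ) : ℂ :=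
  if p.2 ≤ p.1 then
    (p.1.choose p.2 : ℂ) * (Complex.I * x) ^ (p.1 - p.2) * (-Complex.I * t) ^ p.2
      / (p.1.factorial : ℂ) * k ^ (p.1 + p.2)
  else 0

lemma freeAux_row (t x : ℝ) (k : ℂ) (m : ℕ) :
    HasSum (fun r : ℕ => freeAux t x k (m, r))
      ((Complex.I * k * x - Complex.I * k ^ 2 * t) ^ m / (m.factorial : ℂ)) := by
  have h0 : ∀ r ∉ Finset.range (m + 1), freeAux t x k (m, r) = 0 := by
    intro r hr
    simp only [Finset.mem_range, Nat.lt_succ_iff, not_le] at hr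
    simp [freeAux, Nat.not_le.mpr hr]
  have := hasSum_sum_of_ne_finset_zero (L := SummationFilter.unconditional ℕ) h0
  convert this using 1
  rw [show Complex.I * k * x - Complex.I * k ^ 2 * t
      = -Complex.I * k ^ 2 * t + Complex.I * k * x by ring, add_pow, Finset.sum_div]
  refine Finset.sum_congr rfl fun r hr => ?_
  have hrm : r ≤ m := Nat.lt_succ_iff.mp (Finset.mem_range.mp hr)
  simp only [freeAux, if_pos hrm]
  rw [show m + r = (m - r) + 2 * r by omega, pow_add, pow_mul]
  ring

lemma freeAux_row_norm (t x : ℝ) (ht : 0 < t) {B : ℝ} (hB : 0 ≤ B) (m : ℕ) :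
    HasSum (fun r : ℕ => ‖freeAux t x (B : ℂ) (m, r)‖)
      ((B * |x| + B ^ 2 * t) ^ m / (m.factorial : ℝ)) := by
  have h0 : ∀ r ∉ Finset.range (m + 1), ‖freeAux t x (B : ℂ) (m, r)‖ = 0 := by
    intro r hr
    simp only [Finset.mem_range, Nat.lt_succ_iff, not_le] at hr
    simp [freeAux, Nat.not_le.mpr hr]
  have := hasSum_sum_of_ne_finset_zero (L := SummationFilter.unconditional ℕ) h0
  convert this using 1
  rw [show B * |x| + B ^ 2 * t = B ^ 2 * t + B * |x| by ring, add_pow, Finset.sum_div]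
  refine Finset.sum_congr rfl fun r hr => ?_
  have hrm : r ≤ m := Nat.lt_succ_iff.mp (Finset.mem_range.mp hr)
  simp only [freeAux, if_pos hrm]
  rw [norm_mul, norm_div, norm_mul, norm_mul, norm_pow, norm_pow, norm_pow]
  rw [norm_mul, norm_mul]
  simp only [Complex.norm_I, norm_neg, Complex.norm_real, Complex.norm_natCast,
    Real.norm_eq_abs, abs_of_pos ht, abs_of_nonneg hB, one_mul]
  rw [show m + r = (m - r) + 2 * r by omega, pow_add, pow_mul]
  ring

lemma freeAux_antidiagonal_sum (t x : ℝ) (k : ℂ) (j : ℕ) :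
    ∑ p ∈ Finset.HasAntidiagonal.antidiagonal j, freeAux t x k p = freeCoeff t x j * k ^ j := by
  rw [Finset.Nat.sum_antidiagonal_eq_sum_range_succ_mk]
  have hfil : (Finset.range (j + 1)).filter (fun m => j - m ≤ m)
      = Finset.Icc ((j + 1) / 2) j := by
    ext a
    simp only [Finset.mem_filter, Finset.mem_range, Finset.mem_Icc, Nat.lt_succ_iff]
    omega
  calc ∑ m ∈ Finset.range (j + 1), freeAux t x k (m, j - m)
      = ∑ m ∈ (Finset.range (j + 1)).filter (fun m => j - m ≤ m),
          (m.choose (j - m) : ℂ) * (Complex.I * x) ^ (m - (j - m)) * (-Complex.I * t) ^ (j - m)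
            / (m.factorial : ℂ) * k ^ (m + (j - m)) := by
        rw [Finset.sum_filter]
        exact Finset.sum_congr rfl fun m _ => rfl
    _ = freeCoeff t x j * k ^ j := by
        rw [hfil, freeCoeff, Finset.sum_mul]
        refine Finset.sum_congr rfl fun m hm => ?_
        simp only [Finset.mem_Icc] at hm
        rw [show m - (j - m) = 2 * m - j by omega, show m + (j - m) = j by omega]
        ring

lemma freeAux_norm_summable (t x : ℝ) (ht : 0 < t) {B : ℝ} (hB : 0 ≤ B) :
    Summable (fun p : ℕ × ℕ => ‖freeAux t x (B : ℂ) p‖) := by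
  rw [summable_prod_of_nonneg (fun p => norm_nonneg _)]
  refine ⟨fun m => (freeAux_row_norm t x ht hB m).summable, ?_⟩
  have : (fun m : ℕ => ∑' r, ‖freeAux t x (B : ℂ) (m, r)‖)
      = fun m : ℕ => (B * |x| + B ^ 2 * t) ^ m / (m.factorial : ℝ) := by
    funext m; exact (freeAux_row_norm t x ht hB m).tsum_eq
  rw [this]
  exact Real.summable_pow_div_factorial _

/-- The plane wave `exp(ikx − ik²t)` has power series `Σⱼ c_j(t,x)·kʲ` in `k`, and for
every `B ≥ 0` the weighted coefficient sum satisfies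
`Σⱼ |c_j(t,x)|·Bʲ ≤ exp(B·|x| + B²·t)`. -/
theorem freeCoeff_expansion_and_bound (t x : ℝ) (ht : 0 < t) :
    (∀ k : ℂ, HasSum (fun j : ℕ => freeCoeff t x j * k ^ j)
        (Complex.exp (Complex.I * k * x - Complex.I * k ^ 2 * t))) ∧
    (∀ B : ℝ, 0 ≤ B →
      Summable (fun j : ℕ => ‖freeCoeff t x j‖ * B ^ j) ∧
      ∑' j : ℕ, ‖freeCoeff t x j‖ * B ^ j ≤
        Real.exp (B * |x| + B ^ 2 * t)) := by
  -- general fact: for any k with summable norms we get the expansion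
  have key : ∀ k : ℂ, Summable (fun p : ℕ × ℕ => ‖freeAux t x k p‖) →
      HasSum (fun j : ℕ => freeCoeff t x j * k ^ j)
        (Complex.exp (Complex.I * k * x - Complex.I * k ^ 2 * t)) := by
    intro k hG
    set w : ℂ := Complex.I * k * x - Complex.I * k ^ 2 * t with hw
    have hs : Summable (freeAux t x k) := Summable.of_norm hG
    have hexp : HasSum (fun m : ℕ => w ^ m / (m.factorial : ℂ)) (Complex.exp w) := by
      rw [Complex.exp_eq_exp_ℂ]
      exact NormedSpace.expSeries_div_hasSum_exp w
    have hsum : HasSum (freeAux t x k) (Complex.exp w) := by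
      have h1 := hs.hasSum
      rwa [Summable.tsum_prod' hs (fun m => (freeAux_row t x k m).summable),
        tsum_congr (fun m => (freeAux_row t x k m).tsum_eq), hexp.tsum_eq] at h1
    have hsig : HasSum (freeAux t x k ∘ Finset.HasAntidiagonal.sigmaAntidiagonalEquivProd)
        (Complex.exp w) :=
      (Finset.HasAntidiagonal.sigmaAntidiagonalEquivProd.hasSum_iff (f := freeAux t x k)).mpr hsum
    refine hsig.sigma fun j => ?_
    have := hasSum_fintype
      (fun c : Finset.HasAntidiagonal.antidiagonal j => (freeAux t x k ∘ Finset.HasAntidiagonal.sigmaAntidiagonalEquivProd) ⟨j, c⟩)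
    have heq : ∑ c : Finset.HasAntidiagonal.antidiagonal j,
        (freeAux t x k ∘ Finset.HasAntidiagonal.sigmaAntidiagonalEquivProd) ⟨j, c⟩
        = freeCoeff t x j * k ^ j := by
      rw [← freeAux_antidiagonal_sum t x k j,
        ← Finset.sum_coe_sort (Finset.HasAntidiagonal.antidiagonal j) (freeAux t x k)]
      rfl
    rwa [heq] at this
  constructor
  · intro k
    apply key
    have h := freeAux_norm_summable t x ht (norm_nonneg k)
    apply h.congr
    intro p
    by_cases hp : p.2 ≤ p.1
    · simp only [freeAux, if_pos hp, norm_mul, norm_pow, norm_div, Complex.norm_real,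
        norm_norm]
    · simp [freeAux, hp]
  · intro B hB
    have hG := freeAux_norm_summable t x ht hB
    -- HasSum of fiber sums to exp
    have hBnorm : ‖(B : ℂ)‖ = B := by
      rw [Complex.norm_real, Real.norm_eq_abs, abs_of_nonneg hB]
    have hexpR : HasSum (fun m : ℕ => (B * |x| + B ^ 2 * t) ^ m / (m.factorial : ℝ))
        (Real.exp (B * |x| + B ^ 2 * t)) := by
      rw [Real.exp_eq_exp_ℝ]
      exact NormedSpace.expSeries_div_hasSum_exp _
    have hsumG : HasSum (fun p : ℕ × ℕ => ‖freeAux t x (B : ℂ) p‖)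
        (Real.exp (B * |x| + B ^ 2 * t)) := by
      have h1 := hG.hasSum
      rwa [Summable.tsum_prod' hG (fun m => (freeAux_row_norm t x ht hB m).summable),
        tsum_congr (fun m => (freeAux_row_norm t x ht hB m).tsum_eq), hexpR.tsum_eq] at h1
    have hsig : HasSum ((fun p : ℕ × ℕ => ‖freeAux t x (B : ℂ) p‖) ∘
          Finset.HasAntidiagonal.sigmaAntidiagonalEquivProd)
        (Real.exp (B * |x| + B ^ 2 * t)) :=
      (Finset.HasAntidiagonal.sigmaAntidiagonalEquivProd.hasSum_iff
        (f := fun p : ℕ × ℕ => ‖freeAux t x (B : ℂ) p‖)).mpr hsumG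
    have hH : HasSum (fun j : ℕ => ∑ p ∈ Finset.HasAntidiagonal.antidiagonal j, ‖freeAux t x (B : ℂ) p‖)
        (Real.exp (B * |x| + B ^ 2 * t)) := by
      refine hsig.sigma fun j => ?_
      have := hasSum_fintype
        (fun c : Finset.HasAntidiagonal.antidiagonal j => ((fun p : ℕ × ℕ => ‖freeAux t x (B : ℂ) p‖) ∘
          Finset.HasAntidiagonal.sigmaAntidiagonalEquivProd) ⟨j, c⟩)
      have heq : ∑ c : Finset.HasAntidiagonal.antidiagonal j,
          ((fun p : ℕ × ℕ => ‖freeAux t x (B : ℂ) p‖) ∘ Finset.HasAntidiagonal.sigmaAntidiagonalEquivProd) ⟨j, c⟩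
          = ∑ p ∈ Finset.HasAntidiagonal.antidiagonal j, ‖freeAux t x (B : ℂ) p‖ := by
        rw [← Finset.sum_coe_sort (Finset.HasAntidiagonal.antidiagonal j)
          (fun p => ‖freeAux t x (B : ℂ) p‖)]
        rfl
      rwa [heq] at this
    have hbound : ∀ j : ℕ, ‖freeCoeff t x j‖ * B ^ j
        ≤ ∑ p ∈ Finset.HasAntidiagonal.antidiagonal j, ‖freeAux t x (B : ℂ) p‖ := by
      intro j
      have h1 : ‖freeCoeff t x j‖ * B ^ j = ‖freeCoeff t x j * (B : ℂ) ^ j‖ := by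
        rw [norm_mul, norm_pow, hBnorm]
      rw [h1, ← freeAux_antidiagonal_sum t x (B : ℂ) j]
      exact norm_sum_le _ _
    have hnn : ∀ j : ℕ, 0 ≤ ‖freeCoeff t x j‖ * B ^ j :=
      fun j => mul_nonneg (norm_nonneg _) (pow_nonneg hB j)
    have hsummable : Summable (fun j : ℕ => ‖freeCoeff t x j‖ * B ^ j) :=
      Summable.of_nonneg_of_le hnn hbound hH.summable
    refine ⟨hsummable, ?_⟩
    calc ∑' j : ℕ, ‖freeCoeff t x j‖ * B ^ j
        ≤ ∑' j : ℕ, ∑ p ∈ Finset.HasAntidiagonal.antidiagonal j, ‖freeAux t x (B : ℂ) p‖ :=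
          Summable.tsum_le_tsum hbound hsummable hH.summable
      _ = Real.exp (B * |x| + B ^ 2 * t) := hH.tsum_eq
end
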